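/- arXiv:math/0511411 — 15 statements merged into one kernel-verified Lean document; each statement's English description precedes it below -/
import Mathlib

section
/- If W is a symmetric (palindromic) word in two letters A and B, then for any two real symmetric positive definite matrices A and B of the same size, the matrix W(A,B) is positive definite (in particular, all its eigenvalues are positive). -/
/-!
Peel a palindrome from both ends: `x :: (v ++ [x])` evaluates to `X * V * X` with `X` Hermitian and
invertible, which is the congruence `Xᴴ * V * X` and so preserves positive definiteness.
-/

/-- Evaluate a word over `{A,B}` (encoded as `List Bool`, `false ↦ A`, `true ↦ B`)
at two matrices by taking the corresponding matrix product. -/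
def wordEval {n : Type*} [Fintype n] [DecidableEq n]
    (w : List Bool) (A B : Matrix n n ℝ) : Matrix n n ℝ :=
  (w.map (fun c => if c then B else A)).prod

open Matrix

section

variable {n K : Type*} [Fintype n] [DecidableEq n] [Field K] [PartialOrder K] [StarRing K]

theorem Matrix.PosDef.mul_mul_self_of_isHermitian {M P : Matrix n n K} (hP : P.PosDef)
    (hM : M.IsHermitian) (hMu : IsUnit M) : (M * P * M).PosDef := by
  simpa only [hM.eq] using hP.conjTranspose_mul_mul_same (mulVec_injective_iff_isUnit.mpr hMu)

theorem List.Palindrome.prod_posDef [StarOrderedRing K] {l : List (Matrix n n K)}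
    (hl : l.Palindrome) (hpos : ∀ M ∈ l, M.PosDef) : l.prod.PosDef := by
  induction hl with
  | nil => simpa using PosDef.one
  | singleton M => simpa using hpos M (by simp)
  | cons_concat M _ ih =>
    have hM := hpos M (by simp)
    rw [List.prod_cons, List.prod_append, List.prod_singleton, ← mul_assoc]
    exact (ih fun N hN => hpos N (by simp [hN])).mul_mul_self_of_isHermitian hM.isHermitian
      hM.isUnit

end

theorem symmetric_word_posDef_general {n : Type*} [Fintype n] [DecidableEq n]
    (w : List Bool) (hsym : w.reverse = w)
    (A B : Matrix n n ℝ) (hA : A.PosDef) (hB : B.PosDef) :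
    (wordEval w A B).PosDef := by
  refine ((List.Palindrome.of_reverse_eq hsym).map (fun c => if c then B else A)).prod_posDef ?_
  simp only [List.forall_mem_map]
  intro c _
  cases c
  exacts [hA, hB]

/-- A symmetric (palindromic) word in two positive definite letters is positive definite. -/
theorem symmetric_word_posDef {n : Type*} [Fintype n] [DecidableEq n]
    (w : List Bool) (hne : w ≠ []) (hsym : w.reverse = w)
    (A B : Matrix n n ℝ) (hA : A.PosDef) (hB : B.PosDef) :
    (wordEval w A B).PosDef :=
  symmetric_word_posDef_general w hsym A B hA hB
end

section
/- An n-by-n real matrix Q can be written as Q = AB with A and B symmetric positive definite if and only if Q is diagonalizable with all eigenvalues positive. -/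
/-!
If `A = R²` with `R = √A`, then `AB = R (RBR) R⁻¹` is similar to the positive definite matrix `RBR`,
which the spectral theorem diagonalizes with positive eigenvalues. Conversely,
`S D S⁻¹ = (S Sᵀ) (S⁻ᵀ D S⁻¹)` and both factors are congruent to positive diagonal matrices.
-/

namespace Matrix

variable {n : Type*} [Fintype n] [DecidableEq n]

def IsQuasiPositive (Q : Matrix n n ℝ) : Prop :=
  ∃ (S : Matrix n n ℝ) (d : n → ℝ), IsUnit S ∧ (∀ i, 0 < d i) ∧ Q = S * diagonal d * S⁻¹

theorem IsQuasiPositive.conj {M P : Matrix n n ℝ} (hM : M.IsQuasiPositive) (hP : IsUnit P) :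
    (P * M * P⁻¹).IsQuasiPositive := by
  obtain ⟨S, d, hS, hd, rfl⟩ := hM
  refine ⟨P * S, d, hP.mul hS, hd, ?_⟩
  simp only [mul_inv_rev, Matrix.mul_assoc]

theorem PosDef.isQuasiPositive {M : Matrix n n ℝ} (hM : M.PosDef) : M.IsQuasiPositive := by
  set U := hM.1.eigenvectorUnitary
  have hU : star (U : Matrix n n ℝ) * U = 1 := Unitary.coe_star_mul_self U
  refine ⟨U, hM.1.eigenvalues, Unitary.isUnit_coe, hM.eigenvalues_pos, ?_⟩
  rw [inv_eq_left_inv hU]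
  exact hM.1.spectral_theorem

theorem PosDef.mul_isQuasiPositive {A B : Matrix n n ℝ} (hA : A.PosDef) (hB : B.PosDef) :
    (A * B).IsQuasiPositive := by
  open scoped MatrixOrder in
  obtain ⟨R, hR, hRR⟩ : ∃ R : Matrix n n ℝ, R.PosDef ∧ R * R = A :=
    ⟨CFC.sqrt A, isStrictlyPositive_iff_posDef.mp (IsStrictlyPositive.sqrt A hA.isStrictlyPositive),
      CFC.sqrt_mul_sqrt_self A⟩
  have hRBR : (star R * B * R).PosDef := (IsUnit.posDef_star_left_conjugate_iff hR.isUnit).mpr hB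
  have hAB : A * B = R * (star R * B * R) * R⁻¹ := by
    rw [star_eq_conjTranspose, hR.1.eq, ← hRR, ← Matrix.mul_assoc, ← Matrix.mul_assoc,
      mul_nonsing_inv_cancel_right _ _ ((isUnit_iff_isUnit_det R).mp hR.isUnit)]
  exact hAB ▸ hRBR.isQuasiPositive.conj hR.isUnit

theorem IsQuasiPositive.exists_posDef_mul {Q : Matrix n n ℝ} (hQ : Q.IsQuasiPositive) :
    ∃ A B : Matrix n n ℝ, A.PosDef ∧ B.PosDef ∧ Q = A * B := by
  obtain ⟨S, d, hS, hd, rfl⟩ := hQ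
  refine ⟨S * star S, star S⁻¹ * diagonal d * S⁻¹, ?_, ?_, ?_⟩
  · simpa using (IsUnit.posDef_star_left_conjugate_iff hS.star).mpr .one
  · exact (IsUnit.posDef_star_left_conjugate_iff (isUnit_nonsing_inv_iff.mpr hS)).mpr
      (.diagonal hd)
  · have hS' : IsUnit Sᴴ.det := (isUnit_iff_isUnit_det _).mp hS.star
    simp only [star_eq_conjTranspose, conjTranspose_nonsing_inv, Matrix.mul_assoc,
      mul_nonsing_inv_cancel_left _ _ hS']

end Matrix

/-- A real matrix factors as a product of two symmetric positive definite matrices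
if and only if it is diagonalizable with all eigenvalues positive (quasi-positive). -/
theorem posDef_factorization_iff_quasiPositive {n : Type*} [Fintype n] [DecidableEq n]
    (Q : Matrix n n ℝ) :
    (∃ A B : Matrix n n ℝ, A.PosDef ∧ B.PosDef ∧ Q = A * B) ↔
    (∃ (S : Matrix n n ℝ) (d : n → ℝ), IsUnit S ∧ (∀ i, 0 < d i) ∧
      Q = S * Matrix.diagonal d * S⁻¹) :=
  ⟨fun ⟨_, _, hA, hB, hQ⟩ => hQ ▸ hA.mul_isQuasiPositive hB,
    Matrix.IsQuasiPositive.exists_posDef_mul⟩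
end

section
/- Suppose Q = S D S^{-1} where D is a positive diagonal matrix and S is invertible, and suppose Q = AB with A, B symmetric positive definite. Then there exists a positive definite matrix E commuting with D such that A = S E S^T and B = S^{-T} E^{-1} D S^{-1}. -/
/-!
Put `E = S⁻¹ A S⁻ᵀ` and `F = Sᵀ B S`: both are congruent to positive definite matrices, hence
symmetric, and `E F = S⁻¹ (A B) S = D`. Transposing gives `F E = D` as well, so
`E D = E F E = D E`, and `F = E⁻¹ D` turns `B = S⁻ᵀ F S⁻¹` into the claimed form.
-/

open Matrix

theorem Matrix.IsSymm.commute_of_mul_eq {n α : Type*} [Fintype n] [CommSemiring α]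
    {E F D : Matrix n n α} (hE : E.IsSymm) (hF : F.IsSymm) (hD : D.IsSymm) (h : E * F = D) :
    Commute E D := by
  have hFE : F * E = D := by rw [← hF.eq, ← hE.eq, ← transpose_mul, h, hD.eq]
  calc E * D = E * F * E := by rw [mul_assoc, hFE]
    _ = D * E := by rw [h]

section Congruence

variable {n α : Type*} [Fintype n] [DecidableEq n] [CommRing α] {S : Matrix n n α}

theorem Matrix.mul_nonsing_inv_mul_transpose_mul_transpose (hS : IsUnit S.det)
    (A : Matrix n n α) : S * (S⁻¹ * A * S⁻¹ᵀ) * Sᵀ = A := by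
  simp only [transpose_nonsing_inv, mul_assoc, mul_nonsing_inv_cancel_left _ _ hS,
    nonsing_inv_mul _ (isUnit_det_transpose S hS), mul_one]

theorem Matrix.transpose_nonsing_inv_mul_transpose_mul_mul (hS : IsUnit S.det)
    (B : Matrix n n α) : S⁻¹ᵀ * (Sᵀ * B * S) * S⁻¹ = B := by
  simp only [transpose_nonsing_inv, mul_assoc,
    nonsing_inv_mul_cancel_left _ _ (isUnit_det_transpose S hS), mul_nonsing_inv _ hS, mul_one]

theorem Matrix.nonsing_inv_mul_transpose_mul_transpose_mul_mul (hS : IsUnit S.det)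
    (A B : Matrix n n α) : (S⁻¹ * A * S⁻¹ᵀ) * (Sᵀ * B * S) = S⁻¹ * (A * B) * S := by
  simp only [transpose_nonsing_inv, mul_assoc,
    nonsing_inv_mul_cancel_left _ _ (isUnit_det_transpose S hS)]

end Congruence

theorem posDef_factorization_form_general {n : Type*} [Fintype n] [DecidableEq n]
    (S : Matrix n n ℝ) (hS : IsUnit S) (d : n → ℝ)
    (A B : Matrix n n ℝ) (hA : A.PosDef) (hB : B.PosDef)
    (hQ : A * B = S * Matrix.diagonal d * S⁻¹) :
    ∃ E : Matrix n n ℝ, E.PosDef ∧ E * Matrix.diagonal d = Matrix.diagonal d * E ∧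
      A = S * E * Sᵀ ∧ B = (S⁻¹)ᵀ * E⁻¹ * Matrix.diagonal d * S⁻¹ := by
  have hSdet : IsUnit S.det := (isUnit_iff_isUnit_det S).1 hS
  set D := diagonal d
  set E := S⁻¹ * A * S⁻¹ᵀ
  set F := Sᵀ * B * S
  have hE : E.PosDef := by
    simpa using hA.mul_mul_conjTranspose_same
      (vecMul_injective_iff_isUnit.2 (isUnit_nonsing_inv_iff.2 hS))
  have hF : F.IsSymm := by
    simpa using isHermitian_conjTranspose_mul_mul S hB.isHermitian
  have hEF : E * F = D := by
    rw [nonsing_inv_mul_transpose_mul_transpose_mul_mul hSdet, hQ]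
    simp only [mul_assoc, nonsing_inv_mul _ hSdet, mul_one, nonsing_inv_mul_cancel_left _ _ hSdet]
  have hF_eq : F = E⁻¹ * D := by
    rw [← hEF, nonsing_inv_mul_cancel_left _ _ ((isUnit_iff_isUnit_det E).1 hE.isUnit)]
  have hcomm : Commute E D :=
    (isHermitian_iff_isSymm.1 hE.isHermitian).commute_of_mul_eq hF (isSymm_diagonal d) hEF
  refine ⟨E, hE, hcomm.eq, (mul_nonsing_inv_mul_transpose_mul_transpose hSdet A).symm, ?_⟩
  calc B = S⁻¹ᵀ * F * S⁻¹ := (transpose_nonsing_inv_mul_transpose_mul_mul hSdet B).symm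
    _ = S⁻¹ᵀ * E⁻¹ * D * S⁻¹ := by rw [hF_eq, mul_assoc _ E⁻¹]

/-- If `Q = S D S⁻¹` with `D` positive diagonal and `S` invertible, then every
factorization `Q = A B` into symmetric positive definite matrices has the form
`A = S E Sᵀ`, `B = S⁻ᵀ E⁻¹ D S⁻¹` for some positive definite `E` commuting with `D`. -/
theorem posDef_factorization_form {n : Type*} [Fintype n] [DecidableEq n]
    (S : Matrix n n ℝ) (hS : IsUnit S) (d : n → ℝ) (hd : ∀ i, 0 < d i)
    (A B : Matrix n n ℝ) (hA : A.PosDef) (hB : B.PosDef)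
    (hQ : A * B = S * Matrix.diagonal d * S⁻¹) :
    ∃ E : Matrix n n ℝ, E.PosDef ∧ E * Matrix.diagonal d = Matrix.diagonal d * E ∧
      A = S * E * Sᵀ ∧ B = (S⁻¹)ᵀ * E⁻¹ * Matrix.diagonal d * S⁻¹ :=
  posDef_factorization_form_general S hS d A B hA hB hQ
end

section
/- Every nearly symmetric word in two positive definite letters has only positive eigenvalues: if W = S1 S2 is a juxtaposition of two symmetric words S1 and S2 (one possibly empty), then for all real symmetric positive definite matrices A and B, all eigenvalues of W(A,B) are positive. -/
/-!
A symmetric word `c w c` evaluates to the congruence `C W C` of the evaluation `W` of `w` by a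
positive definite letter `C`, so by induction symmetric words evaluate to positive definite
matrices. A nearly symmetric word therefore evaluates to a product `P Q` of positive definite
matrices, and if `P Q v = μ v` with `v ≠ 0`, then `(Q v)ᴴ P (Q v) = μ vᴴ Q v` exhibits `μ` as a
quotient of two positive numbers.
-/

open Matrix

open scoped ComplexOrder

namespace Matrix

variable {n : Type*} [Fintype n]

open scoped MatrixOrder in
lemma PosDef.map_algebraMap {𝕜 : Type*} [RCLike 𝕜] [DecidableEq n] {M : Matrix n n ℝ}
    (hM : M.PosDef) : (M.map (algebraMap ℝ 𝕜)).PosDef := by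
  obtain ⟨B, rfl⟩ := CStarAlgebra.nonneg_iff_eq_star_mul_self.mp hM.posSemidef.nonneg
  have hsemi : ((star B * B).map (algebraMap ℝ 𝕜)).PosSemidef := by
    rw [Matrix.map_mul, star_eq_conjTranspose, conjTranspose_map _ fun r => by simp]
    exact posSemidef_conjTranspose_mul_self _
  exact hsemi.posDef_iff_isUnit.mpr (hM.isUnit.map (algebraMap ℝ 𝕜).mapMatrix)

variable {𝕜 : Type*} [RCLike 𝕜] {P Q : Matrix n n 𝕜} {μ : 𝕜}

lemma PosDef.pos_of_mul_mulVec_eq_smul (hP : P.PosDef) (hQ : Q.PosDef) {v : n → 𝕜} (hv : v ≠ 0)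
    (h : (P * Q) *ᵥ v = μ • v) : 0 < μ := by
  have hQv : 0 < star v ⬝ᵥ Q *ᵥ v := hQ.dotProduct_mulVec_pos hv
  have hPQv : 0 < star (Q *ᵥ v) ⬝ᵥ P *ᵥ (Q *ᵥ v) :=
    hP.dotProduct_mulVec_pos fun h0 => hQv.ne' (by rw [h0, dotProduct_zero])
  have key : star (Q *ᵥ v) ⬝ᵥ P *ᵥ (Q *ᵥ v) = μ * (star v ⬝ᵥ Q *ᵥ v) := by
    rw [mulVec_mulVec, h, dotProduct_smul, star_mulVec, hQ.isHermitian.eq, ← dotProduct_mulVec,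
      smul_eq_mul]
  rw [key] at hPQv
  simpa only [mul_inv_cancel_right₀ hQv.ne'] using mul_pos hPQv (RCLike.inv_pos.mpr hQv)

lemma PosDef.pos_of_mem_spectrum_mul [DecidableEq n] (hP : P.PosDef) (hQ : Q.PosDef)
    (hμ : μ ∈ spectrum 𝕜 (P * Q)) : 0 < μ := by
  rw [← spectrum_toLin', ← Module.End.hasEigenvalue_iff_mem_spectrum] at hμ
  obtain ⟨v, hv⟩ := hμ.exists_hasEigenvector
  exact hP.pos_of_mul_mulVec_eq_smul hQ hv.2 (by simpa using hv.apply_eq_smul)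

end Matrix

lemma List.Palindrome.prod_map_posDef {α K n : Type*} [Fintype n] [DecidableEq n] [Field K]
    [PartialOrder K] [StarRing K] [StarOrderedRing K] {w : List α} (hw : w.Palindrome)
    {f : α → Matrix n n K} (hf : ∀ a, (f a).PosDef) : (w.map f).prod.PosDef := by
  induction hw with
  | nil => exact PosDef.one
  | singleton a => simpa using hf a
  | cons_concat a _ ih =>
    simpa [mul_assoc, (hf a).isHermitian.eq] using
      ih.conjTranspose_mul_mul_same (mulVec_injective_of_isUnit (hf a).isUnit)

lemma wordEval_append {n : Type*} [Fintype n] [DecidableEq n] (w₁ w₂ : List Bool)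
    (A B : Matrix n n ℝ) : wordEval (w₁ ++ w₂) A B = wordEval w₁ A B * wordEval w₂ A B := by
  simp [wordEval]

/-- Every nearly symmetric word (a juxtaposition of two palindromes) in two
positive definite letters has only positive eigenvalues. -/
theorem nearly_symmetric_word_pos_eigenvalues {n : Type*} [Fintype n] [DecidableEq n]
    (S1 S2 : List Bool) (h1 : S1.reverse = S1) (h2 : S2.reverse = S2)
    (A B : Matrix n n ℝ) (hA : A.PosDef) (hB : B.PosDef) :
    ∀ μ ∈ spectrum ℂ ((wordEval (S1 ++ S2) A B).map (algebraMap ℝ ℂ)),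
      μ.im = 0 ∧ 0 < μ.re := by
  intro μ hμ
  have hsymm {S : List Bool} (hS : S.reverse = S) :
      ((wordEval S A B).map (algebraMap ℝ ℂ)).PosDef := by
    have hletter (c : Bool) : (if c then B else A).PosDef := by cases c <;> assumption
    exact ((List.Palindrome.of_reverse_eq hS).prod_map_posDef hletter).map_algebraMap
  rw [wordEval_append, Matrix.map_mul] at hμ
  obtain ⟨hre, him⟩ := Complex.pos_iff.mp <| (hsymm h1).pos_of_mem_spectrum_mul (hsymm h2) hμ
  exact ⟨him.symm, hre⟩
end

section
/- Any word in two letters A and B in which the letter B appears at most twice is nearly symmetric, i.e., it can be written as the juxtaposition of two symmetric words. -/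
/-!
With `A` = `false` and `B` = `true`, cut the word at its first and at its last `B`. The middle
piece `m` (empty, `B`, or `B Aᵇ B`) is symmetric, so the word is `Aᵃ m Aᶜ`; if, say, `a ≤ c`,
it splits as `(Aᵃ m Aᵃ) (Aᶜ⁻ᵃ)`.
-/

open List

def IsNearlySymmetric {α : Type*} (w : List α) : Prop :=
  ∃ s t : List α, s.reverse = s ∧ t.reverse = t ∧ w = s ++ t

theorem isNearlySymmetric_replicate_append_append_replicate {α : Type*} (x : α) {m : List α}
    (hm : m.reverse = m) (a c : ℕ) :
    IsNearlySymmetric (replicate a x ++ m ++ replicate c x) := by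
  rcases le_total a c with h | h
  · obtain ⟨d, rfl⟩ := Nat.exists_eq_add_of_le h
    exact ⟨replicate a x ++ m ++ replicate a x, replicate d x, by simp [hm], by simp,
      by simp only [replicate_add, append_assoc]⟩
  · obtain ⟨d, rfl⟩ := Nat.exists_eq_add_of_le' h
    exact ⟨replicate d x, replicate c x ++ m ++ replicate c x, by simp, by simp [hm],
      by simp only [replicate_add, append_assoc]⟩

theorem eq_replicate_false_of_true_notMem {w : List Bool} (h : true ∉ w) :
    w = replicate w.length false :=
  eq_replicate_of_mem fun _ hb => Bool.eq_false_iff.mpr fun hb' => h (hb' ▸ hb)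

theorem exists_eq_replicate_false_append_append_replicate_false {w : List Bool}
    (h : w.count true ≤ 2) :
    ∃ a c : ℕ, ∃ m : List Bool, m.reverse = m ∧
      w = replicate a false ++ m ++ replicate c false := by
  by_cases hw : true ∈ w
  · obtain ⟨s, t, rfl, hs⟩ := eq_append_cons_of_mem hw
    rw [eq_replicate_false_of_true_notMem hs]
    by_cases ht : true ∈ t
    · obtain ⟨u, v, rfl, hu⟩ := eq_append_cons_of_mem ht
      have hv : true ∉ v := by
        rw [← count_eq_zero]
        simp only [count_append, count_cons_self] at h
        omega
      rw [eq_replicate_false_of_true_notMem hu, eq_replicate_false_of_true_notMem hv]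
      exact ⟨s.length, v.length, true :: replicate u.length false ++ [true], by simp, by simp⟩
    · rw [eq_replicate_false_of_true_notMem ht]
      exact ⟨s.length, t.length, [true], rfl, by simp⟩
  · rw [eq_replicate_false_of_true_notMem hw]
    exact ⟨0, w.length, [], rfl, by simp⟩

/-- A word in which the letter `B` (encoded `true`) appears at most twice is
nearly symmetric: it is a concatenation of two palindromes (one possibly empty). -/
theorem atMostTwoB_nearlySymmetric (w : List Bool) (h : w.count true ≤ 2) :
    ∃ S1 S2 : List Bool, S1.reverse = S1 ∧ S2.reverse = S2 ∧ w = S1 ++ S2 := by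
  obtain ⟨a, c, m, hm, rfl⟩ := exists_eq_replicate_false_append_append_replicate_false h
  exact isNearlySymmetric_replicate_append_append_replicate false hm a c
end

section
/- Every word of length less than 6 in two letters is nearly symmetric, and consequently every word of length less than 6 in two real symmetric positive definite matrices has only positive eigenvalues. -/
/-!
A palindrome in strictly positive elements of a C⋆-algebra is strictly positive: peeling off the
outer letters `x ⋯ x` is a congruence by the self-adjoint unit `x`. A product `a * b` of two
strictly positive elements is similar, via `√a`, to `√a * b * √a`, which is strictly positive, so
its spectrum is positive. Hence a nearly symmetric word in positive definite matrices, being a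
product of two palindromes, has positive spectrum. That every binary word of length below `6` is
nearly symmetric is a finite check.
-/

open Matrix

open ComplexOrder

def NearlySymmetric {α : Type*} (w : List α) : Prop :=
  ∃ p q : List α, p.reverse = p ∧ q.reverse = q ∧ w = p ++ q

theorem nearlySymmetric_of_length_lt_six (w : List Bool) (hw : w.length < 6) :
    NearlySymmetric w := by
  suffices h : ∃ k ≤ w.length, (w.take k).reverse = w.take k ∧ (w.drop k).reverse = w.drop k by
    obtain ⟨k, -, hp, hq⟩ := h
    exact ⟨w.take k, w.drop k, hp, hq, (List.take_append_drop k w).symm⟩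
  match w with
  | [] => exact ⟨0, by simp⟩
  | [a] => revert a; decide
  | [a, b] => revert a b; decide
  | [a, b, c] => revert a b c; decide
  | [a, b, c, d] => revert a b c d; decide
  | [a, b, c, d, e] => revert a b c d e; decide
  | _ :: _ :: _ :: _ :: _ :: _ :: _ => simp only [List.length_cons] at hw; omega

theorem IsStrictlyPositive.list_prod_map_of_palindrome {α A : Type*} [Semiring A] [StarRing A]
    [PartialOrder A] [StarOrderedRing A] {f : α → A} (hf : ∀ x, IsStrictlyPositive (f x))
    {l : List α} (hl : l.Palindrome) : IsStrictlyPositive (l.map f).prod := by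
  induction hl with
  | nil => simp
  | singleton x => simpa using hf x
  | cons_concat x _ ih =>
    simpa [mul_assoc] using
      conjugate_of_isUnit_of_isSelfAdjoint _ _ (hf x).isUnit (hf x).isSelfAdjoint ih

theorem IsStrictlyPositive.spectrum_mul_pos {A : Type*} [CStarAlgebra A] [PartialOrder A]
    [StarOrderedRing A] {a b : A} (ha : IsStrictlyPositive a) (hb : IsStrictlyPositive b)
    {μ : ℂ} (hμ : μ ∈ spectrum ℂ (a * b)) : 0 < μ := by
  have hs : IsStrictlyPositive (CFC.sqrt a) := ha.sqrt
  obtain ⟨s, hs_eq⟩ := hs.isUnit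
  have hconj : a * b = s * (s * b * s) * ↑s⁻¹ := by
    rw [← CFC.sqrt_mul_sqrt_self a ha.nonneg, ← hs_eq]
    simp [mul_assoc]
  rw [hconj, spectrum.units_conjugate] at hμ
  rw [← hs_eq] at hs
  exact (conjugate_of_isUnit_of_isSelfAdjoint b _ s.isUnit hs.isSelfAdjoint hb).spectrum_pos hμ

theorem NearlySymmetric.spectrum_list_prod_map_pos {α A : Type*} [CStarAlgebra A] [PartialOrder A]
    [StarOrderedRing A] {f : α → A} (hf : ∀ x, IsStrictlyPositive (f x)) {w : List α}
    (hw : NearlySymmetric w) {μ : ℂ} (hμ : μ ∈ spectrum ℂ (w.map f).prod) : 0 < μ := by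
  obtain ⟨p, q, hp, hq, rfl⟩ := hw
  rw [List.map_append, List.prod_append] at hμ
  exact (IsStrictlyPositive.list_prod_map_of_palindrome hf (.of_reverse_eq hp)).spectrum_mul_pos
    (IsStrictlyPositive.list_prod_map_of_palindrome hf (.of_reverse_eq hq)) hμ

section
variable {n : Type*} [Fintype n] [DecidableEq n]
open scoped MatrixOrder

theorem Matrix.PosDef.map_ofReal {A : Matrix n n ℝ} (hA : A.PosDef) :
    (A.map (algebraMap ℝ ℂ)).PosDef := by
  have hR : IsStrictlyPositive (CFC.sqrt A) := hA.isStrictlyPositive.sqrt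
  set R := (CFC.sqrt A).map (algebraMap ℝ ℂ)
  have hRR : A.map (algebraMap ℝ ℂ) = Rᴴ * R := by
    rw [← conjTranspose_map _ (fun r => by simp [Complex.conj_ofReal]), ← Matrix.map_mul,
      ← star_eq_conjTranspose, hR.isSelfAdjoint.star_eq,
      CFC.sqrt_mul_sqrt_self A hA.posSemidef.nonneg]
  rw [hRR]
  exact PosDef.conjTranspose_mul_self R
    (mulVec_injective_of_isUnit (hR.isUnit.map (algebraMap ℝ ℂ).mapMatrix))

theorem wordEval_map_algebraMap (w : List Bool) (A B : Matrix n n ℝ) :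
    (wordEval w A B).map (algebraMap ℝ ℂ) =
      (w.map fun c => (if c then B else A).map (algebraMap ℝ ℂ)).prod := by
  rw [wordEval, ← RingHom.mapMatrix_apply, map_list_prod, List.map_map]
  rfl

open scoped Matrix.Norms.L2Operator in
theorem NearlySymmetric.spectrum_wordEval_map_pos {w : List Bool} (hw : NearlySymmetric w)
    {A B : Matrix n n ℝ} (hA : A.PosDef) (hB : B.PosDef) {μ : ℂ}
    (hμ : μ ∈ spectrum ℂ ((wordEval w A B).map (algebraMap ℝ ℂ))) : 0 < μ := by
  rw [wordEval_map_algebraMap] at hμ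
  refine hw.spectrum_list_prod_map_pos (fun c => ?_) hμ
  cases c
  exacts [hA.map_ofReal.isStrictlyPositive, hB.map_ofReal.isStrictlyPositive]

end

/-- Every word of length `< 6` is nearly symmetric, and consequently every word of
length `< 6` in two real symmetric positive definite matrices has only positive
eigenvalues. -/
theorem short_words_nearlySymmetric_pos_eigenvalues :
    (∀ w : List Bool, w.length < 6 →
      ∃ S1 S2 : List Bool, S1.reverse = S1 ∧ S2.reverse = S2 ∧ w = S1 ++ S2) ∧
    (∀ (w : List Bool), w.length < 6 →
      ∀ {n : Type} [Fintype n] [DecidableEq n] (A B : Matrix n n ℝ),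
        A.PosDef → B.PosDef →
        ∀ μ ∈ spectrum ℂ ((wordEval w A B).map (algebraMap ℝ ℂ)),
          μ.im = 0 ∧ 0 < μ.re) := by
  refine ⟨nearlySymmetric_of_length_lt_six, fun w hw n _ _ A B hA hB μ hμ => ?_⟩
  obtain ⟨hre, him⟩ := Complex.pos_iff.mp
    ((nearlySymmetric_of_length_lt_six w hw).spectrum_wordEval_map_pos hA hB hμ)
  exact ⟨him.symm, hre⟩
end

section
/- For any word W in two letters and any 2-by-2 Hermitian positive definite matrices A and B, both eigenvalues of W(A,B) are positive. -/
/-!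
Diagonalize `A` by a unitary and then conjugate by `diag(1, c)`, `c` the phase of the off-diagonal
entry of the transformed `B`: the diagonal factor leaves `A` diagonal, and afterwards both matrices
are entrywise nonnegative reals. Hence `W(A, B)` is unitarily similar to a nonnegative real
`2 × 2` matrix `[[p, q], [r, s]]` with determinant `det A ^ k * det B ^ l > 0`. Its characteristic
polynomial `μ² - (p + s) μ + (ps - qr)` has discriminant `(p - s)² + 4qr ≥ 0`, positive constant
term and nonnegative trace, so both of its roots are positive reals.
-/

open Matrix ComplexOrder

/-- Evaluate a word over `{A,B}` (`false ↦ A`, `true ↦ B`) at two complex matrices. -/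
noncomputable def wordEvalC (w : List Bool) (A B : Matrix (Fin 2) (Fin 2) ℂ) : Matrix (Fin 2) (Fin 2) ℂ :=
  (w.map (fun c => if c then B else A)).prod

open Polynomial Unitary

namespace Matrix

variable (n R : Type*) [Fintype n] [DecidableEq n] [Semiring R] [PartialOrder R] [IsOrderedRing R]

def nonnegSubmonoid : Submonoid (Matrix n n R) where
  carrier := {M | ∀ i j, 0 ≤ M i j}
  one_mem' i j := by by_cases h : i = j <;> simp [one_apply, h]
  mul_mem' {M N} hM hN i j := Finset.sum_nonneg fun k _ => mul_nonneg (hM i k) (hN k j)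

end Matrix

theorem map_wordEvalC {F : Type*} [FunLike F (Matrix (Fin 2) (Fin 2) ℂ) (Matrix (Fin 2) (Fin 2) ℂ)]
    [MonoidHomClass F (Matrix (Fin 2) (Fin 2) ℂ) (Matrix (Fin 2) (Fin 2) ℂ)] (f : F)
    (w : List Bool) (A B : Matrix (Fin 2) (Fin 2) ℂ) :
    f (wordEvalC w A B) = wordEvalC w (f A) (f B) := by
  simp only [wordEvalC, map_list_prod, List.map_map]
  congr 2
  ext c : 1
  cases c <;> rfl

theorem wordEvalC_mem {S : Type*} [SetLike S (Matrix (Fin 2) (Fin 2) ℂ)]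
    [SubmonoidClass S (Matrix (Fin 2) (Fin 2) ℂ)] {s : S} (w : List Bool)
    {A B : Matrix (Fin 2) (Fin 2) ℂ} (hA : A ∈ s) (hB : B ∈ s) : wordEvalC w A B ∈ s :=
  list_prod_mem <| List.forall_mem_map.2 fun c _ => by cases c <;> assumption

theorem Unitary.conjStarAlgAut_apply_of_commute {S R : Type*} [Semiring R] [StarMul R]
    [SMul S R] [IsScalarTower S R R] [SMulCommClass S R R] {u : unitary R} {x : R}
    (h : Commute (u : R) x) : conjStarAlgAut S R u x = x := by
  rw [conjStarAlgAut_apply, h.eq, mul_assoc, mul_star_self_of_mem u.prop, mul_one]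

theorem Matrix.det_conjStarAlgAut {n R : Type*} [Fintype n] [DecidableEq n] [CommRing R]
    [StarRing R] (u : unitary (Matrix n n R)) (X : Matrix n n R) :
    (conjStarAlgAut R _ u X).det = X.det := by
  rw [conjStarAlgAut_apply, det_mul, det_mul, mul_right_comm, ← det_mul,
    mul_star_self_of_mem u.prop, det_one, one_mul]

theorem Matrix.diagonal_mem_unitary {n R : Type*} [Fintype n] [DecidableEq n] [CommRing R]
    [StarRing R] {d : n → R} (hd : d ∈ unitary (n → R)) :
    diagonal d ∈ unitary (Matrix n n R) := by
  rw [← unitaryGroup, mem_unitaryGroup_iff', star_eq_conjTranspose, diagonal_conjTranspose,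
    diagonal_mul_diagonal]
  exact congrArg diagonal (star_mul_self_of_mem hd) |>.trans diagonal_one

theorem Complex.pos_of_sq_sub_mul_add_eq_zero {t d : ℝ} {μ : ℂ} (ht : 0 ≤ t) (hd : 0 < d)
    (hdisc : 4 * d ≤ t ^ 2) (hμ : μ ^ 2 - t * μ + d = 0) : 0 < μ := by
  have hre := congrArg re hμ
  have him := congrArg im hμ
  simp only [sq, add_re, sub_re, mul_re, ofReal_re, ofReal_im, add_im, sub_im, mul_im,
    zero_re, zero_im] at hre him
  have h_im : μ.im = 0 := by
    rcases mul_eq_zero.mp (show μ.im * (2 * μ.re - t) = 0 by linarith) with h | h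
    · exact h
    · nlinarith [sq_nonneg μ.im]
  rw [h_im] at hre
  exact pos_iff.2 ⟨by nlinarith, h_im.symm⟩

theorem Matrix.pos_of_mem_spectrum_of_mem_nonnegSubmonoid {X : Matrix (Fin 2) (Fin 2) ℂ}
    (hX : X ∈ nonnegSubmonoid (Fin 2) ℂ) (hdet : 0 < X.det) {μ : ℂ} (hμ : μ ∈ spectrum ℂ X) :
    0 < μ := by
  obtain ⟨M, hM, rfl⟩ : ∃ M : Matrix (Fin 2) (Fin 2) ℝ, (∀ i j, 0 ≤ M i j) ∧
      X = M.map ((↑) : ℝ → ℂ) :=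
    ⟨fun i j => (X i j).re, fun i j => (Complex.nonneg_iff.1 (hX i j)).1,
      by ext i j; exact Complex.eq_re_of_ofReal_le (r := 0) (by simpa using hX i j)⟩
  rw [mem_spectrum_iff_isRoot_charpoly, charpoly_fin_two] at hμ
  simp only [IsRoot, eval_sub, eval_add, eval_mul, eval_pow, eval_X, eval_C, trace_fin_two,
    det_fin_two, map_apply] at hμ
  simp only [det_fin_two, map_apply] at hdet
  replace hdet : 0 < M 0 0 * M 1 1 - M 0 1 * M 1 0 := by exact_mod_cast hdet
  refine Complex.pos_of_sq_sub_mul_add_eq_zero (t := M 0 0 + M 1 1)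
    (add_nonneg (hM 0 0) (hM 1 1)) hdet ?_ (by push_cast; exact hμ)
  nlinarith [sq_nonneg (M 0 0 - M 1 1), mul_nonneg (hM 0 1) (hM 1 0)]

theorem exists_diagonal_unitary_conj_mem_nonnegSubmonoid {H : Matrix (Fin 2) (Fin 2) ℂ}
    (hH : H.PosSemidef) : ∃ e : Fin 2 → ℂ, ∃ he : diagonal e ∈ unitary (Matrix (Fin 2) (Fin 2) ℂ),
      conjStarAlgAut ℂ _ ⟨_, he⟩ H ∈ nonnegSubmonoid (Fin 2) ℂ := by
  set c : ℂ := Complex.exp ((H 0 1).arg * Complex.I)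
  have hc : c * (starRingEnd ℂ) c = 1 := by
    rw [Complex.mul_conj, Complex.normSq_eq_norm_sq, Complex.norm_exp_ofReal_mul_I]
    norm_num
  have hHc : ‖H 0 1‖ * c = H 0 1 := Complex.norm_mul_exp_arg_mul_I _
  have he : ![1, c] ∈ unitary (Fin 2 → ℂ) := by
    rw [mem_iff_star_mul_self]
    ext i
    fin_cases i <;> simp [mul_comm _ c, hc]
  refine ⟨_, diagonal_mem_unitary he, fun i j => ?_⟩
  have hH₁₀ : H 1 0 = (starRingEnd ℂ) (H 0 1) := (hH.1.apply 1 0).symm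
  simp only [conjStarAlgAut_apply, star_eq_conjTranspose, diagonal_conjTranspose, diagonal_mul,
    mul_diagonal]
  fin_cases i <;> fin_cases j <;> simp
  · exact hH.diag_nonneg
  · rw [← hHc, mul_assoc, hc, mul_one]
    exact Complex.zero_le_real.2 (norm_nonneg _)
  · rw [hH₁₀, ← hHc, map_mul, Complex.conj_ofReal, mul_left_comm, hc, mul_one]
    exact Complex.zero_le_real.2 (norm_nonneg _)
  · rw [mul_right_comm, hc, one_mul]
    exact hH.diag_nonneg

theorem exists_unitary_conj_mem_nonnegSubmonoid {A B : Matrix (Fin 2) (Fin 2) ℂ}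
    (hA : A.PosSemidef) (hB : B.PosSemidef) : ∃ u : unitary (Matrix (Fin 2) (Fin 2) ℂ),
      conjStarAlgAut ℂ _ u A ∈ nonnegSubmonoid (Fin 2) ℂ ∧
        conjStarAlgAut ℂ _ u B ∈ nonnegSubmonoid (Fin 2) ℂ := by
  set U := star hA.1.eigenvectorUnitary
  obtain ⟨e, he, hBe⟩ :=
    exists_diagonal_unitary_conj_mem_nonnegSubmonoid (hB.mul_mul_conjTranspose_same U)
  refine ⟨⟨_, he⟩ * U, fun i j => ?_, by rw [conjStarAlgAut_mul_apply]; exact hBe⟩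
  rw [conjStarAlgAut_mul_apply, hA.1.conjStarAlgAut_star_eigenvectorUnitary,
    conjStarAlgAut_apply_of_commute (commute_diagonal _ _)]
  by_cases h : i = j
  · subst h
    simpa using hA.eigenvalues_nonneg i
  · simp [h]

/-- Both eigenvalues of any word in two 2-by-2 Hermitian positive definite
matrices are positive. -/
theorem word_two_by_two_pos_eigenvalues (w : List Bool)
    (A B : Matrix (Fin 2) (Fin 2) ℂ) (hA : A.PosDef) (hB : B.PosDef) :
    ∀ μ ∈ spectrum ℂ (wordEvalC w A B), μ.im = 0 ∧ 0 < μ.re := by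
  obtain ⟨u, hAu, hBu⟩ := exists_unitary_conj_mem_nonnegSubmonoid hA.posSemidef hB.posSemidef
  set φ := conjStarAlgAut ℂ (Matrix (Fin 2) (Fin 2) ℂ) u
  have h_nonneg : φ (wordEvalC w A B) ∈ nonnegSubmonoid (Fin 2) ℂ :=
    map_wordEvalC φ w A B ▸ wordEvalC_mem w hAu hBu
  have h_det : 0 < (φ (wordEvalC w A B)).det := by
    rw [det_conjStarAlgAut]
    exact wordEvalC_mem (s := (Submonoid.pos ℂ).comap (detMonoidHom (n := Fin 2)))
      w hA.det_pos hB.det_pos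
  intro μ hμ
  rw [← AlgEquiv.spectrum_eq φ] at hμ
  obtain ⟨h_re, h_im⟩ :=
    Complex.pos_iff.1 (pos_of_mem_spectrum_of_mem_nonnegSubmonoid h_nonneg h_det hμ)
  exact ⟨h_im.symm, h_re⟩
end

section
/- For 2-by-2 Hermitian positive definite matrices A and B and any positive integer m, the polynomial p(t) = Tr[(A + tB)^m] has all coefficients positive. -/
/-!
Diagonalise `A` by a unitary `U`, then conjugate further by the diagonal unitary
`diag(1, exp(-i arg b))`, where `b` is the off-diagonal entry of `U⋆ B U`: this keeps `A`
diagonal and turns `B` into a real matrix with off-diagonal entries `|b|`. The trace of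
`(A + tB)^m` is invariant under the conjugation, so `p(t) = Tr[(D + tB')^m]` with `D`, `B'` real,
entrywise nonnegative and with positive diagonals. Every entry of `(D + tB')^m` then has
nonnegative coefficients, and the `(0,0)` entry dominates `(D₀₀ + tB'₀₀)^m` coefficientwise,
whose coefficients are positive multiples of binomial coefficients.
-/

open Matrix Polynomial ComplexOrder

namespace Polynomial

variable {R : Type*} [Semiring R] [PartialOrder R] [IsOrderedRing R]

def nonnegCoeffs : Subsemiring R[X] where
  carrier := {p | ∀ n, 0 ≤ p.coeff n}
  mul_mem' {p q} hp hq n := by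
    rw [coeff_mul]
    exact Finset.sum_nonneg fun x _ => mul_nonneg (hp x.1) (hq x.2)
  one_mem' n := by
    rw [coeff_one]
    split_ifs
    exacts [zero_le_one, le_rfl]
  add_mem' hp hq n := by
    rw [coeff_add]
    exact add_nonneg (hp n) (hq n)
  zero_mem' n := by simp

lemma C_mem_nonnegCoeffs {a : R} (ha : 0 ≤ a) : C a ∈ nonnegCoeffs := fun n => by
  rw [coeff_C]
  split_ifs
  exacts [ha, le_rfl]

lemma X_mem_nonnegCoeffs : (X : R[X]) ∈ nonnegCoeffs := fun n => by
  rw [coeff_X]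
  split_ifs
  exacts [zero_le_one, le_rfl]

lemma coeff_C_add_C_mul_X_pow_pos {K : Type*} [Field K] [LinearOrder K] [IsStrictOrderedRing K]
    {a b : K} (ha : 0 < a) (hb : 0 < b) {k j : ℕ} (hj : j ≤ k) :
    0 < ((C a + C b * X) ^ k).coeff j := by
  have : C a + C b * X = C b * (X + C (a / b)) := by
    rw [mul_add, ← C_mul, mul_div_cancel₀ a hb.ne']
    ring
  rw [this, mul_pow, ← C_pow, coeff_C_mul, coeff_X_add_C_pow]
  have : 0 < (k.choose j : K) := by exact_mod_cast Nat.choose_pos hj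
  positivity

end Polynomial

namespace Subsemiring

variable {R n : Type*} [Semiring R] [Fintype n] [DecidableEq n] {S : Subsemiring R}
  {M : Matrix n n R}

lemma exists_mem_pow_apply_self_eq_add (hM : M ∈ S.matrix) (i : n) (k : ℕ) :
    ∃ s ∈ S, (M ^ k) i i = M i i ^ k + s := by
  induction k with
  | zero => exact ⟨0, S.zero_mem, by simp⟩
  | succ k ih =>
    obtain ⟨s, hs, hk⟩ := ih
    have hrest : ∑ c ∈ Finset.univ.erase i, (M ^ k) i c * M c i ∈ S :=
      sum_mem fun c _ => mul_mem (pow_mem hM k i c) (hM c i)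
    refine ⟨s * M i i + ∑ c ∈ Finset.univ.erase i, (M ^ k) i c * M c i,
      add_mem (mul_mem hs (hM i i)) hrest, ?_⟩
    rw [pow_succ, mul_apply, ← Finset.add_sum_erase _ _ (Finset.mem_univ i), hk, pow_succ,
      add_mul, add_assoc]

lemma exists_mem_trace_pow_eq_add (hM : M ∈ S.matrix) (i : n) (k : ℕ) :
    ∃ s ∈ S, (M ^ k).trace = M i i ^ k + s := by
  obtain ⟨s, hs, hi⟩ := exists_mem_pow_apply_self_eq_add hM i k
  refine ⟨s + ∑ j ∈ Finset.univ.erase i, (M ^ k) j j,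
    add_mem hs (sum_mem fun j _ => pow_mem hM k j j), ?_⟩
  rw [trace, ← Finset.add_sum_erase _ _ (Finset.mem_univ i), diag_apply, hi, add_assoc]
  rfl

end Subsemiring

namespace Matrix

variable {n R : Type*} [CommSemiring R]

noncomputable def pencil (A B : Matrix n n R) : Matrix n n R[X] :=
  A.map C + (X : R[X]) • B.map C

lemma pencil_apply (A B : Matrix n n R) (i j : n) :
    pencil A B i j = C (A i j) + C (B i j) * X := by
  simp only [pencil, add_apply, smul_apply, map_apply, smul_eq_mul]
  ring

lemma pencil_map {S : Type*} [CommSemiring S] (f : R →+* S) (A B : Matrix n n R) :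
    pencil (A.map f) (B.map f) = (pencil A B).map (Polynomial.map f) := by
  ext i j
  simp [pencil_apply]

lemma trace_pow_pencil_map {S : Type*} [CommSemiring S] [Fintype n] [DecidableEq n] (f : R →+* S)
    (A B : Matrix n n R) (m : ℕ) :
    (pencil (A.map f) (B.map f) ^ m).trace = (pencil A B ^ m).trace.map f := by
  rw [pencil_map, ← coe_mapRingHom, ← Matrix.map_pow, AddMonoidHom.map_trace]

lemma trace_pow_pencil_conj [Fintype n] [DecidableEq n] {P Q : Matrix n n R} (hQP : Q * P = 1)
    (A B : Matrix n n R) (m : ℕ) :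
    (pencil (Q * A * P) (Q * B * P) ^ m).trace = (pencil A B ^ m).trace := by
  let u : (Matrix n n R[X])ˣ :=
    ⟨C.mapMatrix P, C.mapMatrix Q, by rw [← map_mul, mul_eq_one_comm.1 hQP, map_one],
      by rw [← map_mul, hQP, map_one]⟩
  have hconj : pencil (Q * A * P) (Q * B * P) =
      (↑u⁻¹ : Matrix n n R[X]) * pencil A B * (u : Matrix n n R[X]) := by
    simp [u, pencil, Matrix.map_mul, mul_add, add_mul, Matrix.mul_assoc]
  rw [hconj, Units.conj_pow', trace_units_conj']

theorem coeff_trace_pow_pencil_pos {K : Type*} [Fintype n] [DecidableEq n] [Field K]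
    [LinearOrder K] [IsStrictOrderedRing K] {A B : Matrix n n K} (hA : ∀ i j, 0 ≤ A i j)
    (hB : ∀ i j, 0 ≤ B i j) {k : n} (hAk : 0 < A k k) (hBk : 0 < B k k) {m j : ℕ} (hj : j ≤ m) :
    0 < (pencil A B ^ m).trace.coeff j := by
  have hpencil : pencil A B ∈ (nonnegCoeffs : Subsemiring K[X]).matrix := fun i j => by
    change pencil A B i j ∈ nonnegCoeffs
    rw [pencil_apply]
    exact add_mem (C_mem_nonnegCoeffs (hA i j))
      (mul_mem (C_mem_nonnegCoeffs (hB i j)) X_mem_nonnegCoeffs)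
  obtain ⟨s, hs, htrace⟩ := Subsemiring.exists_mem_trace_pow_eq_add hpencil k m
  rw [htrace, coeff_add, pencil_apply]
  exact add_pos_of_pos_of_nonneg (coeff_C_add_C_mul_X_pow_pos hAk hBk hj) (hs j)

end Matrix

namespace Matrix.IsHermitian

open Complex

lemma exists_diagonal_unitary_conj_eq_map_ofReal {B : Matrix (Fin 2) (Fin 2) ℂ}
    (hB : B.IsHermitian) :
    ∃ v : Fin 2 → ℂ, diagonal v ∈ unitaryGroup (Fin 2) ℂ ∧
      star (diagonal v) * B * diagonal v =
        (!![(B 0 0).re, ‖B 0 1‖; ‖B 0 1‖, (B 1 1).re] : Matrix (Fin 2) (Fin 2) ℝ).map ofReal := by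
  set w := Complex.exp (↑(-arg (B 0 1)) * I)
  have hw : starRingEnd ℂ w * w = 1 := by
    rw [conj_mul', norm_exp_ofReal_mul_I, ofReal_one, one_pow]
  have hBw : B 0 1 * w = ‖B 0 1‖ := by
    conv_lhs => rw [← norm_mul_exp_arg_mul_I (B 0 1)]
    rw [mul_assoc, ← Complex.exp_add, ofReal_neg, neg_mul, add_neg_cancel, Complex.exp_zero,
      mul_one]
  refine ⟨![1, w], ?_, ?_⟩
  · rw [mem_unitaryGroup_iff', star_eq_conjTranspose, diagonal_conjTranspose,
      diagonal_mul_diagonal, ← diagonal_one]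
    congr 1
    ext i
    fin_cases i <;> simp [hw]
  · rw [star_eq_conjTranspose, diagonal_conjTranspose]
    ext i j
    rw [mul_diagonal, diagonal_mul]
    fin_cases i <;> fin_cases j <;>
      simp only [Fin.zero_eta, Fin.mk_one, Fin.isValue, Pi.star_apply, cons_val_zero, cons_val_one,
        cons_val', cons_val_fin_one, star_one, RCLike.star_def, one_mul, mul_one, map_apply, of_apply]
    · exact (hB.coe_re_apply_self 0).symm
    · exact hBw
    · rw [← hB.apply 1 0, ← star_def, ← star_mul, hBw, star_def, conj_ofReal]
    · rw [mul_right_comm, hw, one_mul]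
      exact (hB.coe_re_apply_self 1).symm

theorem exists_unitary_conj_eq_diagonal_and_map_ofReal {A B : Matrix (Fin 2) (Fin 2) ℂ}
    (hA : A.IsHermitian) (hB : B.IsHermitian) :
    ∃ W ∈ unitaryGroup (Fin 2) ℂ, ∃ Br : Matrix (Fin 2) (Fin 2) ℝ, (∀ i j, i ≠ j → 0 ≤ Br i j) ∧
      star W * A * W = (diagonal hA.eigenvalues).map ofReal ∧ star W * B * W = Br.map ofReal := by
  set U : Matrix (Fin 2) (Fin 2) ℂ := (hA.eigenvectorUnitary : Matrix (Fin 2) (Fin 2) ℂ)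
  have hAU : star U * A * U = (diagonal hA.eigenvalues).map ofReal := by
    rw [← Unitary.conjStarAlgAut_star_apply (S := ℂ), conjStarAlgAut_star_eigenvectorUnitary,
      diagonal_map ofReal_zero]
    rfl
  have hBU : (star U * B * U).IsHermitian := isHermitian_conjTranspose_mul_mul U hB
  obtain ⟨v, hv, hBv⟩ := hBU.exists_diagonal_unitary_conj_eq_map_ofReal
  refine ⟨U * diagonal v, mul_mem hA.eigenvectorUnitary.2 hv, _, ?_, ?_,
    by rw [← hBv]; simp only [star_mul, Matrix.mul_assoc]⟩
  · intro i j hij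
    fin_cases i <;> fin_cases j <;> simp at hij ⊢
  · calc star (U * diagonal v) * A * (U * diagonal v)
        = star (diagonal v) * (star U * A * U) * diagonal v := by
          simp only [star_mul, Matrix.mul_assoc]
      _ = star (diagonal v) * diagonal v * (diagonal hA.eigenvalues).map ofReal := by
          rw [hAU, diagonal_map ofReal_zero, Matrix.mul_assoc, Matrix.mul_assoc,
            (commute_diagonal _ _).eq]
      _ = (diagonal hA.eigenvalues).map ofReal := by
          rw [(mem_unitaryGroup_iff').1 hv, Matrix.one_mul]

end Matrix.IsHermitian

theorem Matrix.PosDef.exists_unitary_conj_eq_map_ofReal_nonneg {A B : Matrix (Fin 2) (Fin 2) ℂ}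
    (hA : A.PosDef) (hB : B.PosDef) :
    ∃ W ∈ unitaryGroup (Fin 2) ℂ, ∃ D Br : Matrix (Fin 2) (Fin 2) ℝ,
      (∀ i j, 0 ≤ D i j ∧ 0 ≤ Br i j) ∧ (∀ i, 0 < D i i ∧ 0 < Br i i) ∧
      star W * A * W = D.map Complex.ofReal ∧ star W * B * W = Br.map Complex.ofReal := by
  obtain ⟨W, hW, Br, hBr, hAW, hBW⟩ := hA.1.exists_unitary_conj_eq_diagonal_and_map_ofReal hB.1
  have hBr_diag (i : Fin 2) : 0 < Br i i := by
    have hpos : (star W * B * W).PosDef :=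
      (IsUnit.posDef_star_left_conjugate_iff (Unitary.toUnits ⟨W, hW⟩).isUnit).2 hB
    rw [hBW] at hpos
    simpa using hpos.diag_pos (i := i)
  refine ⟨W, hW, _, Br, fun i j => ⟨?_, ?_⟩, fun i => ⟨by simpa using hA.eigenvalues_pos i,
    hBr_diag i⟩, hAW, hBW⟩
  · rw [diagonal_apply]
    split_ifs
    exacts [(hA.eigenvalues_pos i).le, le_rfl]
  · rcases eq_or_ne i j with rfl | hij
    exacts [(hBr_diag i).le, hBr i j hij]

theorem trace_pow_poly_pos_coeffs_general (A B : Matrix (Fin 2) (Fin 2) ℂ)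
    (hA : A.PosDef) (hB : B.PosDef) (m : ℕ) :
    ∀ i ≤ m,
      (((A.map Polynomial.C + (Polynomial.X : Polynomial ℂ) • B.map Polynomial.C) ^ m).trace.coeff i).im = 0 ∧
      0 < (((A.map Polynomial.C + (Polynomial.X : Polynomial ℂ) • B.map Polynomial.C) ^ m).trace.coeff i).re := by
  intro i hi
  obtain ⟨W, hW, D, Br, hnonneg, hpos, hAW, hBW⟩ := hA.exists_unitary_conj_eq_map_ofReal_nonneg hB
  have hreal : 0 < (pencil D Br ^ m).trace.coeff i :=
    coeff_trace_pow_pencil_pos (fun i j => (hnonneg i j).1) (fun i j => (hnonneg i j).2)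
      (hpos 0).1 (hpos 0).2 hi
  have htrace : (pencil A B ^ m).trace = (pencil D Br ^ m).trace.map Complex.ofRealHom := by
    calc (pencil A B ^ m).trace = (pencil (star W * A * W) (star W * B * W) ^ m).trace :=
          (trace_pow_pencil_conj ((mem_unitaryGroup_iff').1 hW) A B m).symm
      _ = _ := by
          rw [hAW, hBW]
          exact trace_pow_pencil_map Complex.ofRealHom D Br m
  change ((pencil A B ^ m).trace.coeff i).im = 0 ∧ 0 < ((pencil A B ^ m).trace.coeff i).re
  rw [htrace, coeff_map]
  exact ⟨Complex.ofReal_im _, by simpa using hreal⟩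

/-- For 2-by-2 Hermitian positive definite `A`, `B` and any positive integer `m`,
the polynomial `p(t) = Tr[(A + tB)^m]` has all coefficients positive (real). -/
theorem trace_pow_poly_pos_coeffs (A B : Matrix (Fin 2) (Fin 2) ℂ)
    (hA : A.PosDef) (hB : B.PosDef) (m : ℕ) (hm : 0 < m) :
    ∀ i ≤ m,
      (((A.map Polynomial.C + (Polynomial.X : Polynomial ℂ) • B.map Polynomial.C) ^ m).trace.coeff i).im = 0 ∧
      0 < (((A.map Polynomial.C + (Polynomial.X : Polynomial ℂ) • B.map Polynomial.C) ^ m).trace.coeff i).re :=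
  trace_pow_poly_pos_coeffs_general A B hA hB m
end

section
/- There exist 3-by-3 real symmetric positive definite matrices A and B such that Tr(ABA^2B^2) < 0. In particular, the matrices A = [[1,20,210],[20,402,4240],[210,4240,44903]] and B = [[36501,-3820,190],[-3820,401,-20],[190,-20,1]] are positive definite and satisfy Tr(BABAAB) < 0. -/
/-!
Both matrices come with an explicit `LDLᵀ` factorization with unitriangular `L` and positive
diagonal `D`, which certifies positive definiteness:
`A = Lᵀ diag(1, 2, 3) L` with `L = [[1,20,210],[0,1,20],[0,0,1]]`, and `B = Lᵀ L` with
`L = [[1,0,0],[-20,1,0],[190,-20,1]]`. The trace is then an exact integer computation, and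
`Tr(A B A² B²) = Tr(B A B A A B)` by cyclicity.
-/

open Matrix

namespace Matrix

variable {n R : Type*} [Fintype n]

theorem posDef_conjTranspose_mul_diagonal_mul [DecidableEq n] [CommRing R] [PartialOrder R]
    [StarRing R] [StarOrderedRing R] [NoZeroDivisors R] {L : Matrix n n R} {d : n → R}
    (hd : ∀ i, 0 < d i) (hL : L.det ≠ 0) : (Lᴴ * diagonal d * L).PosDef :=
  (PosDef.diagonal hd).conjTranspose_mul_mul_same (mulVec_injective_of_det_ne_zero hL)

theorem trace_mul_mul_sq_mul_sq [DecidableEq n] [CommRing R] (A B : Matrix n n R) :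
    (A * B * A ^ 2 * B ^ 2).trace = (B * A * B * A * A * B).trace := by
  rw [sq, sq, show A * B * (A * A) * (B * B) = (A * B * A * A * B) * B by
    simp only [Matrix.mul_assoc], trace_mul_comm]
  simp only [Matrix.mul_assoc]

end Matrix

def witnessA : Matrix (Fin 3) (Fin 3) ℝ := !![1, 20, 210; 20, 402, 4240; 210, 4240, 44903]

def witnessB : Matrix (Fin 3) (Fin 3) ℝ := !![36501, -3820, 190; -3820, 401, -20; 190, -20, 1]

theorem witnessA_posDef : witnessA.PosDef := by
  have hLDL : witnessA = (!![1, 20, 210; 0, 1, 20; 0, 0, 1] : Matrix (Fin 3) (Fin 3) ℝ)ᴴ *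
      diagonal ![1, 2, 3] * !![1, 20, 210; 0, 1, 20; 0, 0, 1] := by
    ext i j
    fin_cases i <;> fin_cases j <;> simp [witnessA, mul_apply, Fin.sum_univ_three] <;> norm_num
  rw [hLDL]
  refine posDef_conjTranspose_mul_diagonal_mul (fun i => ?_) (by simp [det_fin_three])
  fin_cases i <;> norm_num

theorem witnessB_posDef : witnessB.PosDef := by
  have hLDL : witnessB = (!![1, 0, 0; -20, 1, 0; 190, -20, 1] : Matrix (Fin 3) (Fin 3) ℝ)ᴴ *
      diagonal ![1, 1, 1] * !![1, 0, 0; -20, 1, 0; 190, -20, 1] := by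
    ext i j
    fin_cases i <;> fin_cases j <;> simp [witnessB, mul_apply, Fin.sum_univ_three] <;> norm_num
  rw [hLDL]
  refine posDef_conjTranspose_mul_diagonal_mul (fun i => ?_) (by simp [det_fin_three])
  fin_cases i <;> norm_num

theorem trace_witnessB_mul_witnessA_mul :
    (witnessB * witnessA * witnessB * witnessA * witnessA * witnessB).trace = -3164 := by
  simp [witnessA, witnessB, trace, Fin.sum_univ_three]
  norm_num

/-- There exist 3-by-3 real symmetric positive definite matrices with
`Tr(A B A² B²) < 0`; in particular the explicit pair below works. -/
theorem exists_posDef_trace_ABAABB_neg :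
    ((!![(1:ℝ),20,210; 20,402,4240; 210,4240,44903]).PosDef ∧
     (!![(36501:ℝ),-3820,190; -3820,401,-20; 190,-20,1]).PosDef ∧
     ((!![(36501:ℝ),-3820,190; -3820,401,-20; 190,-20,1]) *
      (!![(1:ℝ),20,210; 20,402,4240; 210,4240,44903]) *
      (!![(36501:ℝ),-3820,190; -3820,401,-20; 190,-20,1]) *
      (!![(1:ℝ),20,210; 20,402,4240; 210,4240,44903]) *
      (!![(1:ℝ),20,210; 20,402,4240; 210,4240,44903]) *
      (!![(36501:ℝ),-3820,190; -3820,401,-20; 190,-20,1])).trace < 0) ∧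
    ∃ A B : Matrix (Fin 3) (Fin 3) ℝ, A.PosDef ∧ B.PosDef ∧
      (A * B * A ^ 2 * B ^ 2).trace < 0 := by
  have htrace : (witnessB * witnessA * witnessB * witnessA * witnessA * witnessB).trace < 0 := by
    rw [trace_witnessB_mul_witnessA_mul]
    norm_num
  exact ⟨⟨witnessA_posDef, witnessB_posDef, htrace⟩, _, _, witnessA_posDef, witnessB_posDef,
    (trace_mul_mul_sq_mul_sq _ _).trans_lt htrace⟩
end

section
/- There exist 3-by-3 real symmetric positive definite matrices A and B such that the matrix ABA^2B^2 has an eigenvalue that is not positive. -/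
/-!
The trace of a real matrix is the sum of its complex eigenvalues, so a matrix `A B A² B²` with
negative trace has an eigenvalue with negative real part. For `A = diagonal a` this trace is
`∑ i j, a i * a j ^ 2 * B i j * (B ^ 2) i j`; with `a = (1, t, t²)` for large `t` and `B`
positive definite with a small last diagonal entry, the off-diagonal terms outweigh the diagonal
ones.
-/

open Matrix

theorem Matrix.exists_mem_spectrum_re_neg_of_re_trace_neg {n : Type*} [Fintype n] [DecidableEq n]
    {M : Matrix n n ℂ} (h : M.trace.re < 0) : ∃ μ ∈ spectrum ℂ M, μ.re < 0 := by
  by_contra! hμ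
  rw [trace_eq_sum_roots_charpoly, ← Complex.coe_reAddGroupHom, map_multiset_sum] at h
  refine h.not_ge (Multiset.sum_nonneg fun x hx => ?_)
  obtain ⟨z, hz, rfl⟩ := Multiset.mem_map.mp hx
  exact hμ z (mem_spectrum_iff_isRoot_charpoly.mpr (Polynomial.isRoot_of_mem_roots hz))

theorem Matrix.exists_mem_spectrum_map_re_neg_of_trace_neg {n : Type*} [Fintype n]
    [DecidableEq n] {M : Matrix n n ℝ} (h : M.trace < 0) :
    ∃ μ ∈ spectrum ℂ (M.map (algebraMap ℝ ℂ)), μ.re < 0 := by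
  apply exists_mem_spectrum_re_neg_of_re_trace_neg
  rw [← AddMonoidHom.coe_coe (algebraMap ℝ ℂ), ← AddMonoidHom.map_trace]
  simpa using h

def counterexampleA : Matrix (Fin 3) (Fin 3) ℝ := diagonal ![1, 80, 6400]

def counterexampleB : Matrix (Fin 3) (Fin 3) ℝ := !![2981, -330, -8; -330, 85, -6; -8, -6, 1]

theorem counterexampleA_posDef : counterexampleA.PosDef :=
  posDef_diagonal_iff.mpr fun i => by fin_cases i <;> norm_num

theorem counterexampleB_posDef : counterexampleB.PosDef := by
  set D : Matrix (Fin 3) (Fin 3) ℝ := !![1, 0, 0; -54, 7, 0; -8, -6, 1]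
  have hD : IsUnit D := by
    rw [isUnit_iff_isUnit_det, det_fin_three]
    simp [D]
  have hB : Dᴴ * D = counterexampleB := by
    ext i j
    fin_cases i <;> fin_cases j <;>
      simp only [D, counterexampleB, conjTranspose_eq_transpose_of_trivial, mul_apply,
        transpose_apply, of_apply, cons_val', cons_val_zero, cons_val_one, cons_val,
        cons_val_fin_one, Fin.sum_univ_three] <;> norm_num
  exact hB ▸ PosDef.conjTranspose_mul_self D (mulVec_injective_of_isUnit hD)

theorem trace_counterexample_word_neg :
    (counterexampleA * counterexampleB * counterexampleA ^ 2 * counterexampleB ^ 2).trace < 0 := by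
  simp only [counterexampleA, counterexampleB, sq, diagonal_vec3, mul_fin_three,
    trace_fin_three_of]
  norm_num

/-- There exist 3-by-3 real symmetric positive definite matrices `A`, `B` such that
`A B A² B²` has an eigenvalue that is not a positive real number. -/
theorem exists_posDef_word_nonpositive_eigenvalue :
    ∃ A B : Matrix (Fin 3) (Fin 3) ℝ, A.PosDef ∧ B.PosDef ∧
      ∃ μ ∈ spectrum ℂ ((A * B * A ^ 2 * B ^ 2).map (algebraMap ℝ ℂ)),
        ¬(μ.im = 0 ∧ 0 < μ.re) := by
  obtain ⟨μ, hμ, hre⟩ :=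
    exists_mem_spectrum_map_re_neg_of_trace_neg trace_counterexample_word_neg
  exact ⟨counterexampleA, counterexampleB, counterexampleA_posDef, counterexampleB_posDef,
    μ, hμ, fun h => hre.not_gt h.2⟩
end

section
/- If there exist n-by-n real symmetric positive definite matrices giving a word W an eigenvalue that is not a positive real number, then for every positive integer k there exist real symmetric positive definite matrices A', B' (of the same size) such that W(A',B')^k has an eigenvalue that is not a positive real number. -/
open Matrix

/-!
Deform `(A, B)` along `t ↦ ((1 - t) • 1 + t • A, (1 - t) • 1 + t • B)`, `t ∈ [0, 1]`. The pair stays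
positive definite, so the word stays invertible and its eigenvalues never vanish. At `t = 0` the
word is `1`, with all eigenvalues of argument `0`; at `t = 1` some eigenvalue `μ` has `arg μ ≠ 0`.
The eigenvalues, as roots of the characteristic polynomial, move continuously: the parameters at
which the spectrum lies in the closed sector `|arg| ≤ ε`, resp. meets its complementary closed
sector, form two closed sets covering `[0, 1]`. By connectedness they meet, which yields an
eigenvalue `z` with `|arg z| = ε`. For `ε = min |arg μ| (π / (k + 1))` the power `z ^ k`, an
eigenvalue of `W ^ k`, has argument `k arg z ∈ (-π, π) \ {0}`, so it is not a positive real.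
-/

open Polynomial Filter Topology AffineMap Set Real
open scoped ComplexOrder

theorem Multiset.exists_eq_ofFn_of_card_eq {α : Type*} {s : Multiset α} {N : ℕ}
    (h : Multiset.card s = N) : ∃ f : Fin N → α, s = ↑(List.ofFn f) := by
  subst h
  refine ⟨fun i => s.toList.get (i.cast (Multiset.length_toList s).symm), ?_⟩
  conv_lhs => rw [← Multiset.coe_toList s]
  congr 1
  apply List.ext_get <;> simp

namespace Polynomial

theorem eval_eq_prod_of_roots_eq_ofFn {K : Type*} [Field K] [IsAlgClosed K] {q : K[X]}
    (hq : q.Monic) {N : ℕ} {v : Fin N → K} (hv : q.roots = ↑(List.ofFn v)) (z : K) :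
    q.eval z = ∏ i, (z - v i) := by
  conv_lhs => rw [(IsAlgClosed.splits q).eq_prod_roots_of_monic hq, hv]
  simp [List.prod_ofFn, eval_prod]

theorem exists_subseq_tendsto_roots {N : ℕ} {q : ℕ → ℂ[X]} {q₀ : ℂ[X]}
    (hmonic : ∀ m, (q m).Monic) (hdeg : ∀ m, (q m).natDegree = N)
    (heval : ∀ z, Tendsto (fun m => (q m).eval z) atTop (𝓝 (q₀.eval z)))
    {R : ℝ} (hR : ∀ m, ∀ z ∈ (q m).roots, ‖z‖ ≤ R) :
    ∃ φ : ℕ → ℕ, StrictMono φ ∧ ∃ (r : ℕ → Fin N → ℂ) (ρ : Fin N → ℂ),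
      (∀ m, (q (φ m)).roots = ↑(List.ofFn (r m))) ∧ Tendsto r atTop (𝓝 ρ) ∧
      q₀.roots = ↑(List.ofFn ρ) := by
  have hcard m : Multiset.card (q m).roots = N := by
    rw [(IsAlgClosed.splits (q m)).natDegree_eq_card_roots.symm, hdeg]
  choose v hv using fun m => Multiset.exists_eq_ofFn_of_card_eq (hcard m)
  have hball m : v m ∈ Metric.closedBall (0 : Fin N → ℂ) (max R 0) := by
    rw [mem_closedBall_zero_iff, pi_norm_le_iff_of_nonneg (le_max_right _ _)]
    exact fun i => le_max_of_le_left (hR m _ (hv m ▸ List.mem_ofFn.mpr ⟨i, rfl⟩))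
  obtain ⟨ρ, -, φ, hφ, hvρ⟩ := tendsto_subseq_of_bounded Metric.isBounded_closedBall hball
  refine ⟨φ, hφ, v ∘ φ, ρ, fun m => hv (φ m), hvρ, ?_⟩
  have hq₀ : q₀ = ∏ i, (X - C (ρ i)) := by
    refine Polynomial.funext fun z => tendsto_nhds_unique ((heval z).comp hφ.tendsto_atTop) ?_
    simp only [eval_prod, eval_sub, eval_X, eval_C, Function.comp_def,
      eval_eq_prod_of_roots_eq_ofFn (hmonic _) (hv _)]
    exact tendsto_finsetProd _ fun i _ => tendsto_const_nhds.sub (tendsto_pi_nhds.mp hvρ i)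
  have hprod : ∏ i, (X - C (ρ i)) = ((List.ofFn ρ : Multiset ℂ).map (X - C ·)).prod := by
    simp [List.prod_ofFn]
  rw [hq₀, hprod, roots_multiset_prod_X_sub_C]

end Polynomial

namespace Matrix

variable {n : Type*} [Fintype n] [DecidableEq n]

theorem norm_le_sum_norm_of_mem_spectrum {M : Matrix n n ℂ} {z : ℂ} (hz : z ∈ spectrum ℂ M) :
    ‖z‖ ≤ ∑ i, ∑ j, ‖M i j‖ := by
  cases isEmpty_or_nonempty n
  · simp [spectrum.of_subsingleton] at hz
  let := Matrix.linftyOpNormedRing (n := n) (α := ℂ)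
  let := Matrix.linftyOpNormedAlgebra (n := n) (R := ℂ) (α := ℂ)
  have hsup : (Finset.univ.sup fun i => ∑ j, ‖M i j‖₊) ≤ ∑ i, ∑ j, ‖M i j‖₊ :=
    Finset.sup_le fun i _ => Finset.single_le_sum (f := fun i => ∑ j, ‖M i j‖₊)
      (fun _ _ => bot_le) (Finset.mem_univ i)
  calc ‖z‖ ≤ ‖M‖ := spectrum.norm_le_norm_of_mem hz
    _ ≤ ∑ i, ∑ j, ‖M i j‖ := by
      rw [linfty_opNorm_def]
      exact (NNReal.coe_le_coe.mpr hsup).trans_eq (by simp)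

theorem continuous_eval_charpoly {R : Type*} [CommRing R] [TopologicalSpace R]
    [IsTopologicalRing R] (z : R) : Continuous fun M : Matrix n n R => M.charpoly.eval z := by
  simp only [eval_charpoly]
  exact (continuous_const.sub continuous_id).matrix_det

theorem mem_spectrum_iff_of_charpoly_roots_eq_ofFn {K : Type*} [Field K] {M : Matrix n n K}
    {N : ℕ} {r : Fin N → K} (hr : M.charpoly.roots = ↑(List.ofFn r)) {z : K} :
    z ∈ spectrum K M ↔ ∃ i, r i = z := by
  rw [mem_spectrum_iff_isRoot_charpoly, ← mem_roots (charpoly_monic M).ne_zero, hr,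
    Multiset.mem_coe, List.mem_ofFn]

theorem exists_subseq_tendsto_charpoly_roots {M : ℕ → Matrix n n ℂ} {M₀ : Matrix n n ℂ}
    (hM : Tendsto M atTop (𝓝 M₀)) :
    ∃ φ : ℕ → ℕ, StrictMono φ ∧
      ∃ (r : ℕ → Fin (Fintype.card n) → ℂ) (ρ : Fin (Fintype.card n) → ℂ),
        (∀ m, (M (φ m)).charpoly.roots = ↑(List.ofFn (r m))) ∧ Tendsto r atTop (𝓝 ρ) ∧
        M₀.charpoly.roots = ↑(List.ofFn ρ) := by
  have hbound : Continuous fun M : Matrix n n ℂ => ∑ i, ∑ j, ‖M i j‖ := by fun_prop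
  obtain ⟨R, hR⟩ := ((hbound.tendsto M₀).comp hM).bddAbove_range
  refine exists_subseq_tendsto_roots (R := R) (fun m => charpoly_monic _)
    (fun m => charpoly_natDegree_eq_dim _)
    (fun z => ((continuous_eval_charpoly z).tendsto M₀).comp hM) fun m z hz => ?_
  exact (norm_le_sum_norm_of_mem_spectrum (mem_spectrum_iff_isRoot_charpoly.mpr
    (isRoot_of_mem_roots hz))).trans (hR ⟨m, rfl⟩)

end Matrix

section SpectrumAlongPath

variable {n : Type*} [Fintype n] [DecidableEq n] {X : Type*} [TopologicalSpace X]
  [SequentialSpace X] {M : X → Matrix n n ℂ}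

theorem isClosed_setOf_exists_mem_spectrum (hM : Continuous M) {F : Set ℂ} (hF : IsClosed F) :
    IsClosed {x | ∃ z ∈ spectrum ℂ (M x), z ∈ F} := by
  refine IsSeqClosed.isClosed fun x x₀ hx hxx₀ => ?_
  obtain ⟨φ, -, r, ρ, hr, hrρ, hρ⟩ :=
    exists_subseq_tendsto_charpoly_roots ((hM.tendsto x₀).comp hxx₀)
  have hfreq : ∃ᶠ m in atTop, ∃ i, r m i ∈ F := Frequently.of_forall fun m => by
    obtain ⟨z, hz, hzF⟩ := hx (φ m)
    obtain ⟨i, rfl⟩ := (mem_spectrum_iff_of_charpoly_roots_eq_ofFn (hr m)).mp hz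
    exact ⟨i, hzF⟩
  obtain ⟨i, hi⟩ := frequently_exists.mp hfreq
  exact ⟨ρ i, (mem_spectrum_iff_of_charpoly_roots_eq_ofFn hρ).mpr ⟨i, rfl⟩,
    hF.mem_of_frequently_of_tendsto hi (tendsto_pi_nhds.mp hrρ i)⟩

theorem isClosed_setOf_spectrum_subset (hM : Continuous M) {G : Set ℂ} (hG : IsClosed G) :
    IsClosed {x | spectrum ℂ (M x) ⊆ G} := by
  refine IsSeqClosed.isClosed fun x x₀ hx hxx₀ z hz => ?_
  obtain ⟨φ, -, r, ρ, hr, hrρ, hρ⟩ :=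
    exists_subseq_tendsto_charpoly_roots ((hM.tendsto x₀).comp hxx₀)
  obtain ⟨i, rfl⟩ := (mem_spectrum_iff_of_charpoly_roots_eq_ofFn hρ).mp hz
  exact hG.mem_of_tendsto (tendsto_pi_nhds.mp hrρ i) (Eventually.of_forall fun m =>
    hx (φ m) ((mem_spectrum_iff_of_charpoly_roots_eq_ofFn (hr m)).mpr ⟨i, rfl⟩))

theorem IsPreconnected.exists_spectrum_subset_and_mem_spectrum {s : Set X}
    (hs : IsPreconnected s) (hM : Continuous M) {G K : Set ℂ} (hG : IsClosed G)
    (hK : IsClosed K) (hGK : G ∪ K = univ) {a b : X} (ha : a ∈ s) (hb : b ∈ s)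
    (haG : spectrum ℂ (M a) ⊆ G) (hbK : ∃ z ∈ spectrum ℂ (M b), z ∈ K) :
    ∃ x ∈ s, spectrum ℂ (M x) ⊆ G ∧ ∃ z ∈ spectrum ℂ (M x), z ∈ K := by
  have hcover : s ⊆ {x | spectrum ℂ (M x) ⊆ G} ∪ {x | ∃ z ∈ spectrum ℂ (M x), z ∈ K} := by
    intro x _
    by_cases hx : spectrum ℂ (M x) ⊆ G
    · exact Or.inl hx
    · obtain ⟨z, hz, hzG⟩ := not_subset.mp hx
      exact Or.inr ⟨z, hz, (eq_univ_iff_forall.mp hGK z).resolve_left hzG⟩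
  exact isPreconnected_closed_iff.mp hs _ _ (isClosed_setOf_spectrum_subset hM hG)
    (isClosed_setOf_exists_mem_spectrum hM hK) hcover ⟨a, ha, haG⟩ ⟨b, hb, hbK⟩

end SpectrumAlongPath

namespace Complex

theorem cos_mul_norm_le_re {z : ℂ} {ε : ℝ} (h : |z.arg| ≤ ε) (hε : ε ≤ π) :
    Real.cos ε * ‖z‖ ≤ z.re := by
  rw [← norm_mul_cos_arg, ← Real.cos_abs z.arg, mul_comm]
  exact mul_le_mul_of_nonneg_left (cos_le_cos_of_nonneg_of_le_pi (abs_nonneg _) hε h)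
    (norm_nonneg z)

theorem re_le_cos_mul_norm {z : ℂ} {ε : ℝ} (hε : 0 ≤ ε) (h : ε ≤ |z.arg|) :
    z.re ≤ Real.cos ε * ‖z‖ := by
  rw [← norm_mul_cos_arg, ← Real.cos_abs z.arg, mul_comm]
  exact mul_le_mul_of_nonneg_right (cos_le_cos_of_nonneg_of_le_pi hε (abs_arg_le_pi z) h)
    (norm_nonneg z)

theorem abs_arg_eq_of_re_eq_cos_mul_norm {z : ℂ} (hz : z ≠ 0) {ε : ℝ} (hε₀ : 0 ≤ ε)
    (hεπ : ε ≤ π) (h : z.re = Real.cos ε * ‖z‖) : |z.arg| = ε :=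
  injOn_cos ⟨abs_nonneg _, abs_arg_le_pi z⟩ ⟨hε₀, hεπ⟩ <| by
    rw [Real.cos_abs, cos_arg hz, h, mul_div_cancel_right₀ _ (norm_ne_zero_iff.mpr hz)]

theorem im_pow_ne_zero {z : ℂ} {k : ℕ} (hk : 0 < k) (harg : z.arg ≠ 0)
    (hπ : k * |z.arg| < π) : (z ^ k).im ≠ 0 := by
  have hz : z ≠ 0 := fun h => harg (h ▸ arg_zero)
  have him : (z ^ k).im = ‖z‖ ^ k * Real.sin (k * z.arg) := by
    conv_lhs => rw [← norm_mul_exp_arg_mul_I z, mul_pow, ← exp_nat_mul, ← mul_assoc]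
    rw [← ofReal_pow, ← ofReal_natCast, ← ofReal_mul, im_ofReal_mul, exp_ofReal_mul_I_im]
  have hkarg : |(k : ℝ) * z.arg| < π := by
    rwa [abs_mul, Nat.abs_cast]
  rw [him]
  refine mul_ne_zero (pow_ne_zero _ (norm_ne_zero_iff.mpr hz)) fun hsin => ?_
  rw [sin_eq_zero_iff_of_lt_of_lt (abs_lt.mp hkarg).1 (abs_lt.mp hkarg).2] at hsin
  exact mul_ne_zero (Nat.cast_ne_zero.mpr hk.ne') harg hsin

end Complex

theorem IsPreconnected.exists_mem_spectrum_abs_arg_eq {n X : Type*} [Fintype n]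
    [DecidableEq n] [TopologicalSpace X] [SequentialSpace X] {M : X → Matrix n n ℂ}
    {s : Set X} (hs : IsPreconnected s) (hM : Continuous M)
    (hs₀ : ∀ x ∈ s, (0 : ℂ) ∉ spectrum ℂ (M x)) {ε : ℝ} (hε₀ : 0 ≤ ε) (hεπ : ε ≤ π)
    {a b : X} (ha : a ∈ s) (hb : b ∈ s) (haε : ∀ z ∈ spectrum ℂ (M a), |z.arg| ≤ ε)
    (hbε : ∃ z ∈ spectrum ℂ (M b), ε ≤ |z.arg|) :
    ∃ x ∈ s, ∃ z ∈ spectrum ℂ (M x), |z.arg| = ε := by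
  -- `arg` jumps on the negative reals: written with `re` and `‖z‖`, the sectors `|arg z| ≤ ε`
  -- and `ε ≤ |arg z|` (with `0` added) are visibly closed.
  obtain ⟨x, hx, hxG, z, hz, hzK⟩ := hs.exists_spectrum_subset_and_mem_spectrum hM
    (G := {z | Real.cos ε * ‖z‖ ≤ z.re}) (K := {z | z.re ≤ Real.cos ε * ‖z‖})
    (isClosed_le (by fun_prop) (by fun_prop)) (isClosed_le (by fun_prop) (by fun_prop))
    (eq_univ_of_forall fun z => le_total (Real.cos ε * ‖z‖) z.re) ha hb
    (fun z hz => Complex.cos_mul_norm_le_re (haε z hz) hεπ)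
    (let ⟨z, hz, hzε⟩ := hbε; ⟨z, hz, Complex.re_le_cos_mul_norm hε₀ hzε⟩)
  have hz₀ : z ≠ 0 := fun h => hs₀ x hx (h ▸ hz)
  exact ⟨x, hx, z, hz, Complex.abs_arg_eq_of_re_eq_cos_mul_norm hz₀ hε₀ hεπ
    (le_antisymm hzK (hxG hz))⟩

theorem Matrix.PosDef.lineMap {n 𝕜 : Type*} [RCLike 𝕜] {A B : Matrix n n 𝕜} (hA : A.PosDef)
    (hB : B.PosDef) {t : ℝ} (ht : t ∈ Icc 0 1) : (lineMap A B t).PosDef := by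
  rw [lineMap_apply_module]
  rcases ht.2.lt_or_eq with ht₁ | rfl
  · exact (hA.smul (sub_pos.mpr ht₁)).add_posSemidef (hB.posSemidef.smul ht.1)
  · simpa using hB

theorem Matrix.zero_notMem_spectrum_map_of_det_ne_zero {n K L : Type*} [Fintype n]
    [DecidableEq n] [Field K] [Field L] [Algebra K L] {M : Matrix n n K} (hM : M.det ≠ 0) :
    (0 : L) ∉ spectrum L (M.map (algebraMap K L)) := by
  rw [spectrum.zero_notMem_iff, isUnit_iff_isUnit_det, ← RingHom.mapMatrix_apply,
    ← RingHom.map_det, isUnit_iff_ne_zero]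
  exact (_root_.map_ne_zero _).mpr hM

section Word

variable {n : Type*} [Fintype n] [DecidableEq n]

@[simp]
theorem wordEval_one_one (w : List Bool) : wordEval w (1 : Matrix n n ℝ) 1 = 1 := by
  simp [wordEval]

theorem det_wordEval_pos (w : List Bool) {A B : Matrix n n ℝ} (hA : 0 < A.det)
    (hB : 0 < B.det) : 0 < (wordEval w A B).det := by
  rw [wordEval, ← coe_detMonoidHom, map_list_prod, List.map_map]
  refine List.prod_pos fun x hx => ?_
  obtain ⟨c, -, rfl⟩ := List.mem_map.mp hx
  cases c <;> simpa

theorem Continuous.wordEval {X : Type*} [TopologicalSpace X] (w : List Bool)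
    {f g : X → Matrix n n ℝ} (hf : Continuous f) (hg : Continuous g) :
    Continuous fun x => wordEval w (f x) (g x) :=
  continuous_list_prod w fun c _ => by cases c <;> assumption

theorem zero_notMem_spectrum_map_wordEval (w : List Bool) {A B : Matrix n n ℝ} (hA : A.PosDef)
    (hB : B.PosDef) : (0 : ℂ) ∉ spectrum ℂ ((wordEval w A B).map (algebraMap ℝ ℂ)) :=
  zero_notMem_spectrum_map_of_det_ne_zero (det_wordEval_pos w hA.det_pos hB.det_pos).ne'

theorem exists_posDef_mem_spectrum_wordEval_abs_arg_eq (w : List Bool) {A B : Matrix n n ℝ}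
    (hA : A.PosDef) (hB : B.PosDef) {μ : ℂ}
    (hμ : μ ∈ spectrum ℂ ((wordEval w A B).map (algebraMap ℝ ℂ))) {ε : ℝ} (hε₀ : 0 ≤ ε)
    (hεμ : ε ≤ |μ.arg|) :
    ∃ A' B' : Matrix n n ℝ, A'.PosDef ∧ B'.PosDef ∧
      ∃ z ∈ spectrum ℂ ((wordEval w A' B').map (algebraMap ℝ ℂ)), |z.arg| = ε := by
  let P (t : ℝ) : Matrix n n ℂ :=
    (wordEval w (lineMap 1 A t) (lineMap 1 B t)).map (algebraMap ℝ ℂ)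
  have hP : Continuous P :=
    (Continuous.wordEval w (continuous_const.lineMap continuous_const continuous_id)
      (continuous_const.lineMap continuous_const continuous_id)).matrix_map
      (continuous_algebraMap ℝ ℂ)
  have hpd : ∀ t ∈ Icc (0 : ℝ) 1, (lineMap 1 A t).PosDef ∧ (lineMap 1 B t).PosDef :=
    fun t ht => ⟨PosDef.one.lineMap hA ht, PosDef.one.lineMap hB ht⟩
  have hstart : ∀ z ∈ spectrum ℂ (P 0), |z.arg| ≤ ε := by
    intro z hz
    rcases subsingleton_or_nontrivial (Matrix n n ℂ) with _ | _
    · simp [spectrum.of_subsingleton] at hz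
    · simp only [P, Complex.coe_algebraMap, lineMap_apply_zero, wordEval_one_one,
        Complex.ofReal_zero, Complex.ofReal_one, Matrix.map_one, spectrum.one_eq,
        mem_singleton_iff] at hz
      simp [hz, hε₀]
  obtain ⟨t, ht, z, hz, hzε⟩ := isPreconnected_Icc.exists_mem_spectrum_abs_arg_eq hP
    (fun t ht => zero_notMem_spectrum_map_wordEval w (hpd t ht).1 (hpd t ht).2) hε₀
    (hεμ.trans (Complex.abs_arg_le_pi μ)) (left_mem_Icc.mpr zero_le_one)
    (right_mem_Icc.mpr zero_le_one) hstart ⟨μ, by simpa [P] using hμ, hεμ⟩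
  exact ⟨_, _, (hpd t ht).1, (hpd t ht).2, z, hz, hzε⟩

end Word

/-- If some positive definite pair gives the word `W` an eigenvalue that is not a
positive real, then for every positive integer `k` there exist positive definite
`A'`, `B'` of the same size giving `W^k` an eigenvalue that is not a positive real. -/
theorem word_pow_nonpositive_eigenvalue {n : Type*} [Fintype n] [DecidableEq n]
    (w : List Bool)
    (h : ∃ A B : Matrix n n ℝ, A.PosDef ∧ B.PosDef ∧
      ∃ μ ∈ spectrum ℂ ((wordEval w A B).map (algebraMap ℝ ℂ)), ¬(μ.im = 0 ∧ 0 < μ.re)) :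
    ∀ k : ℕ, 0 < k →
      ∃ A' B' : Matrix n n ℝ, A'.PosDef ∧ B'.PosDef ∧
        ∃ μ ∈ spectrum ℂ (((wordEval w A' B') ^ k).map (algebraMap ℝ ℂ)),
          ¬(μ.im = 0 ∧ 0 < μ.re) := by
  obtain ⟨A, B, hA, hB, μ, hμ, hμpos⟩ := h
  intro k hk
  have hμ₀ : μ ≠ 0 := fun h => zero_notMem_spectrum_map_wordEval w hA hB (h ▸ hμ)
  have hμarg : μ.arg ≠ 0 := fun h => hμpos <| by
    obtain ⟨hre, him⟩ := Complex.pos_iff.mp ((Complex.arg_eq_zero_iff_zero_le.mp h).lt_of_ne' hμ₀)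
    exact ⟨him.symm, hre⟩
  set ε := min |μ.arg| (π / (k + 1))
  have hε₀ : 0 < ε := lt_min (abs_pos.mpr hμarg) (by positivity)
  have hkε : k * ε < π :=
    calc k * ε ≤ k * (π / (k + 1)) := by gcongr; exact min_le_right _ _
      _ < π := by rw [mul_div_assoc', div_lt_iff₀ (by positivity)]; nlinarith [pi_pos]
  obtain ⟨A', B', hA', hB', z, hz, hzε⟩ :=
    exists_posDef_mem_spectrum_wordEval_abs_arg_eq w hA hB hμ hε₀.le (min_le_left _ _)
  refine ⟨A', B', hA', hB', z ^ k, ?_, fun hzk => ?_⟩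
  · rw [Matrix.map_pow]
    exact spectrum.pow_mem_pow _ k hz
  · exact Complex.im_pow_ne_zero hk (abs_pos.mp (hzε.symm ▸ hε₀)) (hzε ▸ hkε) hzk.1
end

section
/- Let A and B be real symmetric positive definite matrices and let W(A,B) have all eigenvalues positive for A(t) = t(λ_A I − A) + A and B(t) = t(λ_B I − B) + B at t = 1, where λ_A, λ_B are the largest eigenvalues of A and B. Then A(t) and B(t) are symmetric positive definite for all t in [0,1], and W(A(t),B(t)) has nonzero determinant for all t in [0,1]. -/
/-!
`A(t) = t • (λ_A • 1 - A) + A` is the segment `(1 - t) • A + t • (λ_A • 1)` from `A` to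
`λ_A • 1`. Both endpoints are positive definite, because the eigenvalue `λ_A` of the positive
definite `A` is positive, and positive definiteness is preserved along segments. So `A(t)` and
`B(t)` are invertible for `t ∈ [0, 1]`, and so is every word in them.
-/

open Matrix

open scoped ComplexOrder

namespace Matrix

variable {n 𝕜 : Type*} [RCLike 𝕜]

theorem PosDef.one_sub_smul_add_smul {A B : Matrix n n 𝕜} (hA : A.PosDef) (hB : B.PosDef)
    {t : ℝ} (ht0 : 0 ≤ t) (ht1 : t ≤ 1) : ((1 - t) • A + t • B).PosDef := by
  rcases ht0.eq_or_lt with rfl | ht0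
  · simpa using hA
  · exact .posSemidef_add (hA.posSemidef.smul (sub_nonneg.mpr ht1)) (hB.smul ht0)

variable [Fintype n] [DecidableEq n]

theorem PosDef.pos_of_mem_spectrum {A : Matrix n n 𝕜} (hA : A.PosDef) {l : ℝ}
    (hl : l ∈ spectrum ℝ A) : 0 < l := by
  rw [hA.isHermitian.spectrum_real_eq_range_eigenvalues] at hl
  obtain ⟨i, rfl⟩ := hl
  exact hA.eigenvalues_pos i

theorem PosDef.smul_sub_add_of_mem_spectrum {A : Matrix n n 𝕜} (hA : A.PosDef) {l : ℝ}
    (hl : l ∈ spectrum ℝ A) {t : ℝ} (ht0 : 0 ≤ t) (ht1 : t ≤ 1) :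
    (t • (l • (1 : Matrix n n 𝕜) - A) + A).PosDef := by
  have hsegment : t • (l • (1 : Matrix n n 𝕜) - A) + A = (1 - t) • A + t • (l • 1) := by
    module
  rw [hsegment]
  exact hA.one_sub_smul_add_smul (PosDef.one.smul (hA.pos_of_mem_spectrum hl)) ht0 ht1

end Matrix

theorem isUnit_wordEval {n : Type*} [Fintype n] [DecidableEq n] (w : List Bool)
    {A B : Matrix n n ℝ} (hA : IsUnit A) (hB : IsUnit B) : IsUnit (wordEval w A B) :=
  List.prod_isUnit <| List.forall_mem_map.2 fun c _ => by cases c <;> assumption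

theorem homotopy_posDef_det_ne_zero_general {n : Type*} [Fintype n] [DecidableEq n]
    (w : List Bool) (A B : Matrix n n ℝ) (hA : A.PosDef) (hB : B.PosDef)
    (lA lB : ℝ)
    (hlA : lA ∈ spectrum ℝ A ∧ ∀ μ ∈ spectrum ℝ A, μ ≤ lA)
    (hlB : lB ∈ spectrum ℝ B ∧ ∀ μ ∈ spectrum ℝ B, μ ≤ lB) :
    ∀ t ∈ Set.Icc (0 : ℝ) 1,
      (t • (lA • (1 : Matrix n n ℝ) - A) + A).PosDef ∧
      (t • (lB • (1 : Matrix n n ℝ) - B) + B).PosDef ∧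
      (wordEval w (t • (lA • (1 : Matrix n n ℝ) - A) + A)
                  (t • (lB • (1 : Matrix n n ℝ) - B) + B)).det ≠ 0 := by
  rintro t ⟨ht0, ht1⟩
  have hAt := hA.smul_sub_add_of_mem_spectrum hlA.1 ht0 ht1
  have hBt := hB.smul_sub_add_of_mem_spectrum hlB.1 ht0 ht1
  refine ⟨hAt, hBt, ?_⟩
  exact ((isUnit_iff_isUnit_det _).mp (isUnit_wordEval w hAt.isUnit hBt.isUnit)).ne_zero

/-- Along the homotopy `A(t) = t(λ_A I − A) + A`, `B(t) = t(λ_B I − B) + B` (with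
`λ_A`, `λ_B` the largest eigenvalues of `A`, `B`), both matrices stay symmetric
positive definite, and the word `W(A(t), B(t))` has nonzero determinant throughout. -/
theorem homotopy_posDef_det_ne_zero {n : Type*} [Fintype n] [DecidableEq n]
    (w : List Bool) (A B : Matrix n n ℝ) (hA : A.PosDef) (hB : B.PosDef)
    (lA lB : ℝ)
    (hlA : lA ∈ spectrum ℝ A ∧ ∀ μ ∈ spectrum ℝ A, μ ≤ lA)
    (hlB : lB ∈ spectrum ℝ B ∧ ∀ μ ∈ spectrum ℝ B, μ ≤ lB)
    (h1 : ∀ μ ∈ spectrum ℂ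
        ((wordEval w ((1 : ℝ) • (lA • (1 : Matrix n n ℝ) - A) + A)
                     ((1 : ℝ) • (lB • (1 : Matrix n n ℝ) - B) + B)).map (algebraMap ℝ ℂ)),
        μ.im = 0 ∧ 0 < μ.re) :
    ∀ t ∈ Set.Icc (0 : ℝ) 1,
      (t • (lA • (1 : Matrix n n ℝ) - A) + A).PosDef ∧
      (t • (lB • (1 : Matrix n n ℝ) - B) + B).PosDef ∧
      (wordEval w (t • (lA • (1 : Matrix n n ℝ) - A) + A)
                  (t • (lB • (1 : Matrix n n ℝ) - B) + B)).det ≠ 0 :=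
  homotopy_posDef_det_ne_zero_general w A B hA hB lA lB hlA hlB
end

section
/- If j and k are distinct positive integers, then there exists a 3-by-3 real matrix T that is diagonalizable with positive eigenvalues such that Tr(T^k (T^T)^j) < 0. -/
open Matrix

private lemma aux2 (C t c0 pp rr : ℝ) (hc0 : 1 ≤ c0) (hpp : 0 ≤ pp) (hrr : 0 ≤ rr)
    (hC : C = c0 + pp + rr + 1) (ht : t^2 = 9*(C*C)) :
    c0 + (t^2*pp + t^2*rr) < t^2*t^2/8 := by
  have hC1 : (1:ℝ) ≤ C := by linarith
  have hC0 : (0:ℝ) ≤ C := by linarith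
  have hC2 : (1:ℝ) ≤ C*C := by nlinarith
  have hC3 : C ≤ C*C*C := by nlinarith
  have hC4 : C*C*C ≤ C*C*C*C := by nlinarith
  have h1 : t^2*pp + t^2*rr ≤ 9*(C*C)*C := by
    have h := mul_le_mul_of_nonneg_left (show pp + rr ≤ C by linarith)
      (show (0:ℝ) ≤ 9*(C*C) by nlinarith)
    calc t^2*pp + t^2*rr = 9*(C*C)*(pp+rr) := by rw [ht]; ring
      _ ≤ 9*(C*C)*C := h
  have h2 : t^2*t^2/8 = 81*(C*C*C*C)/8 := by rw [ht]; ring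
  have hc0C : c0 ≤ C := by linarith
  rw [h2]
  nlinarith [hC3, hC4, hC1]

private lemma aux (X Y t w : ℝ) (hX : 2 ≤ X) (hXY : 2*X ≤ Y)
    (ht : t = 3*(X*Y + 1 + X^2*Y^2 + (X-1)*(Y-1) + (X^2-1)*(Y^2-1) + 1))
    (hw : w = -(t^2*(X+Y))/(2*X*Y)) :
    X*Y + 1 + X^2*Y^2 + t^2*((X-1)*(Y-1)) + t^2*((X^2-1)*(Y^2-1))
      + (t^2*(X-1) + w*(X^2-X))*(t^2*(Y-1) + w*(Y^2-Y)) < 0 := by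
  have hX0 : (0:ℝ) < X := by linarith
  have hY0 : (0:ℝ) < Y := by linarith
  have hfact : (t^2*(X-1) + w*(X^2-X))*(t^2*(Y-1) + w*(Y^2-Y))
      = -((X-1)*(Y-1)*(t^2*t^2)*(Y-X)^2/(4*(X*Y))) := by
    rw [hw]; field_simp; ring
  have hq : X*Y/2 ≤ (Y-X)^2 := by
    nlinarith [mul_nonneg (by linarith : (0:ℝ) ≤ Y-2*X) (by linarith : (0:ℝ) ≤ 2*Y-3*X)]
  have hpp : (3:ℝ) ≤ (X-1)*(Y-1) := by nlinarith
  have hrr : (0:ℝ) ≤ (X^2-1)*(Y^2-1) := by nlinarith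
  have ht4 : (0:ℝ) ≤ t^2*t^2 := by positivity
  have h8 : t^2*t^2/8 ≤ (X-1)*(Y-1)*(t^2*t^2)*(Y-X)^2/(4*(X*Y)) := by
    rw [div_le_div_iff₀ (by norm_num) (by positivity)]
    nlinarith [mul_nonneg ht4 (by nlinarith : (0:ℝ) ≤ (X-1)*(Y-1)*(Y-X)^2 - X*Y/2)]
  have hc0 : (1:ℝ) ≤ X*Y + 1 + X^2*Y^2 := by nlinarith
  have hmain := aux2 (X*Y + 1 + X^2*Y^2 + (X-1)*(Y-1) + (X^2-1)*(Y^2-1) + 1) t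
    (X*Y + 1 + X^2*Y^2) ((X-1)*(Y-1)) ((X^2-1)*(Y^2-1)) hc0 (by linarith) hrr
    (by ring) (by rw [ht]; ring)
  linarith [hfact, h8, hmain]

private lemma big (t w : ℝ) (j k : ℕ) :
    ∃ T : Matrix (Fin 3) (Fin 3) ℝ,
      (∃ (S : Matrix (Fin 3) (Fin 3) ℝ) (d : Fin 3 → ℝ), IsUnit S ∧ (∀ i, 0 < d i) ∧
        T = S * Matrix.diagonal d * S⁻¹) ∧
      (T ^ k * (Tᵀ) ^ j).trace
        = (2:ℝ)^k*2^j + 1 + (4:ℝ)^k*4^j + t^2*((1-(2:ℝ)^k)*(1-(2:ℝ)^j))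
          + t^2*(((4:ℝ)^k-1)*((4:ℝ)^j-1))
          + (t^2*((2:ℝ)^k-1) + w*((4:ℝ)^k-(2:ℝ)^k))
            * (t^2*((2:ℝ)^j-1) + w*((4:ℝ)^j-(2:ℝ)^j)) := by
  have hSS' : (!![1,t,w;0,1,t;0,0,1] : Matrix (Fin 3) (Fin 3) ℝ)
      * !![1,-t,t^2-w;0,1,-t;0,0,1] = 1 := by
    rw [Matrix.one_fin_three]
    ext i j'
    fin_cases i <;> fin_cases j' <;>
      simp [Matrix.mul_apply, Fin.sum_univ_three, Matrix.vecHead, Matrix.vecTail] <;> ring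
  have hS'S : (!![1,-t,t^2-w;0,1,-t;0,0,1] : Matrix (Fin 3) (Fin 3) ℝ)
      * !![1,t,w;0,1,t;0,0,1] = 1 := by
    rw [Matrix.one_fin_three]
    ext i j'
    fin_cases i <;> fin_cases j' <;>
      simp [Matrix.mul_apply, Fin.sum_univ_three, Matrix.vecHead, Matrix.vecTail] <;> ring
  have hinv : (!![1,t,w;0,1,t;0,0,1] : Matrix (Fin 3) (Fin 3) ℝ)⁻¹
      = !![1,-t,t^2-w;0,1,-t;0,0,1] := Matrix.inv_eq_right_inv hSS'
  have hd : ∀ i, 0 < (![2,1,4] : Fin 3 → ℝ) i := by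
    intro i; fin_cases i <;> norm_num
  refine ⟨_, ⟨_, _, ⟨⟨_, _, hSS', hS'S⟩, rfl⟩, hd, rfl⟩, ?_⟩
  rw [hinv]
  have hpow : ∀ n : ℕ,
      ((!![1,t,w;0,1,t;0,0,1] : Matrix (Fin 3) (Fin 3) ℝ)
        * Matrix.diagonal (![2,1,4]) * !![1,-t,t^2-w;0,1,-t;0,0,1]) ^ n
      = !![1,t,w;0,1,t;0,0,1] * (Matrix.diagonal (![2,1,4]))^n
          * !![1,-t,t^2-w;0,1,-t;0,0,1] := by
    intro n
    induction n with
    | zero => simp [hSS']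
    | succ n ih =>
        rw [pow_succ, ih, pow_succ (Matrix.diagonal (![2,1,4] : Fin 3 → ℝ)) n]
        simp only [Matrix.mul_assoc]
        rw [← Matrix.mul_assoc (!![1,-t,t^2-w;0,1,-t;0,0,1]) (!![1,t,w;0,1,t;0,0,1]), hS'S,
          Matrix.one_mul]
  have hDn : ∀ n : ℕ, (Matrix.diagonal (![2,1,4] : Fin 3 → ℝ))^n
      = !![(2:ℝ)^n,0,0;0,1,0;0,0,(4:ℝ)^n] := by
    intro n
    rw [Matrix.diagonal_pow]
    ext i j'
    fin_cases i <;> fin_cases j' <;>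
      simp [Matrix.diagonal, Matrix.vecHead, Matrix.vecTail]
  have hM : ∀ A B : ℝ, (!![1,t,w;0,1,t;0,0,1] : Matrix (Fin 3) (Fin 3) ℝ)
      * !![A,0,0;0,1,0;0,0,B] * !![1,-t,t^2-w;0,1,-t;0,0,1]
      = !![A, t*(1-A), t^2*(A-1)+w*(B-A); 0, 1, t*(B-1); 0, 0, B] := by
    intro A B
    ext i j'
    fin_cases i <;> fin_cases j' <;>
      simp [Matrix.mul_apply, Fin.sum_univ_three, Matrix.vecHead, Matrix.vecTail] <;> ring
  rw [← Matrix.transpose_pow, hpow, hpow, hDn, hDn, hM, hM, Matrix.trace_fin_three]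
  simp [Matrix.mul_apply, Fin.sum_univ_three, Matrix.vecHead, Matrix.vecTail]
  ring

private lemma key (j k : ℕ) (hj : 0 < j) (hjk : j < k) :
    ∃ T : Matrix (Fin 3) (Fin 3) ℝ,
      (∃ (S : Matrix (Fin 3) (Fin 3) ℝ) (d : Fin 3 → ℝ), IsUnit S ∧ (∀ i, 0 < d i) ∧
        T = S * Matrix.diagonal d * S⁻¹) ∧
      (T ^ k * (Tᵀ) ^ j).trace < 0 := by
  set X : ℝ := (2:ℝ)^j with hXdef
  set Y : ℝ := (2:ℝ)^k with hYdef
  obtain ⟨t, ht⟩ : ∃ t : ℝ,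
      t = 3*(X*Y + 1 + X^2*Y^2 + (X-1)*(Y-1) + (X^2-1)*(Y^2-1) + 1) := ⟨_, rfl⟩
  obtain ⟨w, hw⟩ : ∃ w : ℝ, w = -(t^2*(X+Y))/(2*X*Y) := ⟨_, rfl⟩
  obtain ⟨T, hdiag, htr⟩ := big t w j k
  refine ⟨T, hdiag, ?_⟩
  rw [htr]
  have h4j : (4:ℝ)^j = X^2 := by
    rw [hXdef, show (4:ℝ) = 2^2 by norm_num, ← pow_mul, mul_comm 2 j, pow_mul]
  have h4k : (4:ℝ)^k = Y^2 := by
    rw [hYdef, show (4:ℝ) = 2^2 by norm_num, ← pow_mul, mul_comm 2 k, pow_mul]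
  have hX : 2 ≤ X := by
    rw [hXdef]
    calc (2:ℝ) = 2^1 := (pow_one 2).symm
      _ ≤ 2^j := pow_le_pow_right₀ (by norm_num) hj
  have hXY : 2*X ≤ Y := by
    rw [hXdef, hYdef]
    calc 2*(2:ℝ)^j = 2^(j+1) := by rw [pow_succ]; ring
      _ ≤ 2^k := pow_le_pow_right₀ (by norm_num) hjk
  have hneg := aux X Y t w hX hXY ht hw
  rw [h4j, h4k]
  linarith [hneg]

private lemma trace_sym (T : Matrix (Fin 3) (Fin 3) ℝ) (j k : ℕ) :
    (T ^ k * (Tᵀ) ^ j).trace = (T ^ j * (Tᵀ) ^ k).trace := by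
  conv_lhs => rw [← Matrix.trace_transpose]
  rw [Matrix.transpose_mul, ← Matrix.transpose_pow, ← Matrix.transpose_pow,
    Matrix.transpose_transpose, Matrix.trace_mul_comm]

/-- If `j ≠ k` are positive integers, then some 3-by-3 real quasi-positive matrix
`T` (diagonalizable with positive eigenvalues) satisfies `Tr(T^k (Tᵀ)^j) < 0`. -/
theorem exists_quasiPositive_trace_neg (j k : ℕ) (hj : 0 < j) (hk : 0 < k) (hjk : j ≠ k) :
    ∃ T : Matrix (Fin 3) (Fin 3) ℝ,
      (∃ (S : Matrix (Fin 3) (Fin 3) ℝ) (d : Fin 3 → ℝ), IsUnit S ∧ (∀ i, 0 < d i) ∧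
        T = S * Matrix.diagonal d * S⁻¹) ∧
      (T ^ k * (Tᵀ) ^ j).trace < 0 := by
  rcases lt_or_gt_of_ne hjk with h | h
  · exact key j k hj h
  · obtain ⟨T, hT, htr⟩ := key k j hk h
    exact ⟨T, hT, by rwa [trace_sym T j k]⟩
end

section
/- Let a > 1 be real and let j < k be positive integers. Then the polynomial g(x) = x^k(a^j − 1) + x^j(1 − a^k) + a^k − a^j has exactly two positive real roots, namely x = 1 and x = a; in particular g(b) ≠ 0 for all real b > 1 with b ≠ a. -/
/-!
Writing `S_m(t) = ∑_{i<m} t^i` and using `t^m - 1 = (t - 1) S_m(t)`, the polynomial factors as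
`g(x) = (x - 1)(a - 1)(S_k(x) S_j(a) - S_j(x) S_k(a))`. For `0 < j < k` the ratio `S_k / S_j`
is strictly increasing on `(0, ∞)`, because `S_k = S_j + ∑_{j ≤ i < k} t^i` and every
exponent in the second sum exceeds every exponent in `S_j`; so the last factor vanishes
at a positive `x` only for `x = a`.
-/

open Finset

section GeomSum

variable {R : Type*} [CommSemiring R] [LinearOrder R] [IsStrictOrderedRing R]

lemma pow_mul_pow_lt_pow_mul_pow {x y : R} (hx : 0 < x) (hxy : x < y) {l i : ℕ} (hli : l < i) :
    x ^ i * y ^ l < x ^ l * y ^ i := by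
  obtain ⟨d, rfl⟩ := Nat.exists_eq_add_of_lt hli
  calc x ^ (l + d + 1) * y ^ l = (x ^ l * y ^ l) * x ^ (d + 1) := by ring
    _ < (x ^ l * y ^ l) * y ^ (d + 1) :=
      mul_lt_mul_of_pos_left (pow_lt_pow_left₀ hxy hx.le d.succ_ne_zero)
        (mul_pos (pow_pos hx l) (pow_pos (hx.trans hxy) l))
    _ = x ^ l * y ^ (l + d + 1) := by ring

lemma geom_sum_mul_geom_sum_lt {x y : R} (hx : 0 < x) (hxy : x < y) {j k : ℕ}
    (hj : 0 < j) (hjk : j < k) :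
    (∑ i ∈ range k, x ^ i) * (∑ i ∈ range j, y ^ i) <
      (∑ i ∈ range j, x ^ i) * (∑ i ∈ range k, y ^ i) := by
  rw [← sum_range_add_sum_Ico _ hjk.le, ← sum_range_add_sum_Ico _ hjk.le, add_mul, mul_add,
    mul_comm (∑ i ∈ range j, x ^ i) (∑ i ∈ range j, y ^ i)]
  refine (add_lt_add_iff_left _).mpr ?_
  rw [sum_mul_sum, sum_mul_sum, sum_comm]
  refine sum_lt_sum_of_nonempty (nonempty_range_iff.mpr hj.ne') fun l hl ↦
    sum_lt_sum_of_nonempty (nonempty_Ico.mpr hjk) fun i hi ↦ ?_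
  exact pow_mul_pow_lt_pow_mul_pow hx hxy ((mem_range.mp hl).trans_le (mem_Ico.mp hi).1)

lemma geom_sum_mul_geom_sum_eq_iff {x y : R} (hx : 0 < x) (hy : 0 < y) {j k : ℕ}
    (hj : 0 < j) (hjk : j < k) :
    (∑ i ∈ range k, x ^ i) * (∑ i ∈ range j, y ^ i) =
      (∑ i ∈ range j, x ^ i) * (∑ i ∈ range k, y ^ i) ↔ x = y := by
  refine ⟨fun h ↦ ?_, fun h ↦ by rw [h, mul_comm]⟩
  rcases lt_trichotomy x y with hxy | hxy | hxy
  · exact absurd h (geom_sum_mul_geom_sum_lt hx hxy hj hjk).ne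
  · exact hxy
  · have := geom_sum_mul_geom_sum_lt hy hxy hj hjk
    rw [mul_comm, ← h, mul_comm] at this
    exact absurd this (lt_irrefl _)

end GeomSum

lemma g_eq_mul_geom_sums {R : Type*} [CommRing R] (a x : R) (j k : ℕ) :
    x ^ k * (a ^ j - 1) + x ^ j * (1 - a ^ k) + a ^ k - a ^ j
      = (x - 1) * (a - 1) *
        ((∑ i ∈ range k, x ^ i) * (∑ i ∈ range j, a ^ i)
          - (∑ i ∈ range j, x ^ i) * (∑ i ∈ range k, a ^ i)) := by
  linear_combination (-((∑ i ∈ range j, a ^ i) * (a - 1))) * geom_sum_mul x k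
    - (x ^ k - 1) * geom_sum_mul a j + ((∑ i ∈ range k, a ^ i) * (a - 1)) * geom_sum_mul x j
    + (x ^ j - 1) * geom_sum_mul a k

/-- For real `a > 1` and positive integers `j < k`, the polynomial
`g(x) = x^k (a^j − 1) + x^j (1 − a^k) + a^k − a^j` has exactly two positive real
roots, `1` and `a`; in particular `g(b) ≠ 0` for all `b > 1` with `b ≠ a`. -/
theorem g_positive_roots (a : ℝ) (ha : 1 < a) (j k : ℕ) (hj : 0 < j) (hjk : j < k) :
    (∀ x : ℝ, 0 < x →
      (x ^ k * (a ^ j - 1) + x ^ j * (1 - a ^ k) + a ^ k - a ^ j = 0 ↔ x = 1 ∨ x = a)) ∧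
    ∀ b : ℝ, 1 < b → b ≠ a →
      b ^ k * (a ^ j - 1) + b ^ j * (1 - a ^ k) + a ^ k - a ^ j ≠ 0 := by
  have roots (x : ℝ) (hx : 0 < x) :
      x ^ k * (a ^ j - 1) + x ^ j * (1 - a ^ k) + a ^ k - a ^ j = 0 ↔ x = 1 ∨ x = a := by
    rw [g_eq_mul_geom_sums, mul_eq_zero, mul_eq_zero, sub_eq_zero, sub_eq_zero, sub_eq_zero,
      geom_sum_mul_geom_sum_eq_iff hx (zero_lt_one.trans ha) hj hjk, or_iff_left ha.ne']
  refine ⟨roots, fun b hb hba h ↦ ?_⟩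
  rcases (roots b (zero_lt_one.trans hb)).mp h with rfl | rfl
  exacts [lt_irrefl _ hb, hba rfl]
end

section
/- For every pair of integers p, q ≥ 2, there exist 3-by-3 real symmetric positive definite matrices A and B such that Tr(A B A^p B^q) < 0; moreover the fixed pair A = [[1,20,210],[20,402,4240],[210,4240,44903]], B = [[36501,-3820,190],[-3820,401,-20],[190,-20,1]] works simultaneously for all p, q ≥ 2. -/
/-!
Both matrices satisfy their characteristic cubic, so `F p q = Tr (A B A^p B^q)` satisfies a
three-term linear recurrence in `p` and one in `q`. A recurrence
`h (n + 3) = t h (n + 2) - s h (n + 1) + d h n` with `s, d ≥ 0` and `s ≤ 2 (t - 2)` preserves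
the cone `h ≤ 0, h (n + 1) ≤ 2 h n`, so it suffices to check nine values `F p q`, `2 ≤ p, q ≤ 4`:
they put `F 2 ·`, `F 3 · - 2 F 2 ·` and `F 4 · - 2 F 3 ·` into the cone along `q`, which in turn
puts every column `F · q` into the cone along `p`.
Positive definiteness comes from `A = Lᴴ diag(1, 2, 3) L` and `B = Mᴴ M` with `L`, `M` invertible.
-/

open Matrix

section Recurrence

variable {K : Type*} [Field K] [LinearOrder K] [IsStrictOrderedRing K]

theorem doubling_of_linearRecurrence {t s d : K} (hs : 0 ≤ s) (hst : s ≤ 2 * (t - 2))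
    (hd : 0 ≤ d) {h : ℕ → K} (hrec : ∀ n, h (n + 3) = t * h (n + 2) - s * h (n + 1) + d * h n)
    (h₀ : h 0 ≤ 0) (h₁ : h 1 ≤ 2 * h 0) (h₂ : h 2 ≤ 2 * h 1) (n : ℕ) :
    h (n + 1) ≤ 2 * h n := by
  suffices key : ∀ n, h n ≤ 0 ∧ h (n + 1) ≤ 2 * h n ∧ h (n + 2) ≤ 2 * h (n + 1) from (key n).2.1
  intro n
  induction n with
  | zero => exact ⟨h₀, h₁, h₂⟩
  | succ n ih =>
    obtain ⟨hn, hn₁, hn₂⟩ := ih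
    refine ⟨by linarith, hn₂, ?_⟩
    -- `s * h (n + 1) ≥ s * h (n + 2) / 2` absorbs the middle term
    have := mul_nonneg hs (show 0 ≤ 2 * h (n + 1) - h (n + 2) by linarith)
    have := mul_nonneg (sub_nonneg.2 hst) (show 0 ≤ -h (n + 2) by linarith)
    have := mul_nonpos_of_nonneg_of_nonpos hd hn
    linarith [hrec n]

theorem le_two_pow_mul_of_linearRecurrence {t s d : K} (hs : 0 ≤ s) (hst : s ≤ 2 * (t - 2))
    (hd : 0 ≤ d) {h : ℕ → K} (hrec : ∀ n, h (n + 3) = t * h (n + 2) - s * h (n + 1) + d * h n)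
    (h₀ : h 0 ≤ 0) (h₁ : h 1 ≤ 2 * h 0) (h₂ : h 2 ≤ 2 * h 1) (n : ℕ) :
    h n ≤ 2 ^ n * h 0 := by
  induction n with
  | zero => simp
  | succ n ih =>
    rw [pow_succ]
    linarith [doubling_of_linearRecurrence hs hst hd hrec h₀ h₁ h₂ n]

end Recurrence

theorem Matrix.trace_mul_pow_add_three_mul {m R : Type*} [Fintype m] [DecidableEq m] [CommRing R]
    {M : Matrix m m R} {t s d : R} (hM : M ^ 3 = t • M ^ 2 - s • M + d • 1)
    (X Y : Matrix m m R) (k : ℕ) :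
    trace (X * M ^ (k + 3) * Y) = t * trace (X * M ^ (k + 2) * Y) -
      s * trace (X * M ^ (k + 1) * Y) + d * trace (X * M ^ k * Y) := by
  have hpow : M ^ (k + 3) = t • M ^ (k + 2) - s • M ^ (k + 1) + d • M ^ k := by
    rw [pow_add, hM]
    simp only [mul_add, mul_sub, mul_smul_comm, mul_one, ← pow_add, ← pow_succ]
  simp only [hpow, Matrix.mul_add, Matrix.mul_sub, Matrix.add_mul, Matrix.sub_mul,
    Matrix.mul_smul, Matrix.smul_mul, trace_add, trace_sub, trace_smul, smul_eq_mul]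

noncomputable def matA : Matrix (Fin 3) (Fin 3) ℝ := !![1, 20, 210; 20, 402, 4240; 210, 4240, 44903]

noncomputable def matB : Matrix (Fin 3) (Fin 3) ℝ :=
  !![36501, -3820, 190; -3820, 401, -20; 190, -20, 1]

theorem matA_eq_conjTranspose_mul_diagonal_mul :
    matA = (!![1, 20, 210; 0, 1, 20; 0, 0, 1] : Matrix (Fin 3) (Fin 3) ℝ)ᴴ *
      diagonal ![1, 2, 3] * !![1, 20, 210; 0, 1, 20; 0, 0, 1] := by
  ext i j; fin_cases i <;> fin_cases j <;> simp [matA, mul_apply, Fin.sum_univ_succ] <;> norm_num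

theorem matB_eq_conjTranspose_mul_self :
    matB = (!![190, -20, 1; -20, 1, 0; 1, 0, 0] : Matrix (Fin 3) (Fin 3) ℝ)ᴴ *
      !![190, -20, 1; -20, 1, 0; 1, 0, 0] := by
  ext i j; fin_cases i <;> fin_cases j <;> simp [matB, mul_apply, Fin.sum_univ_succ] <;> norm_num

theorem posDef_matA : matA.PosDef := by
  rw [matA_eq_conjTranspose_mul_diagonal_mul]
  refine (posDef_diagonal_iff.2 fun i => ?_).conjTranspose_mul_mul_same
    (mulVec_injective_of_isUnit ?_)
  · fin_cases i <;> norm_num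
  · simp [isUnit_iff_isUnit_det, det_fin_three]

theorem posDef_matB : matB.PosDef := by
  rw [matB_eq_conjTranspose_mul_self]
  exact .conjTranspose_mul_self _ (mulVec_injective_of_isUnit (by
    simp [isUnit_iff_isUnit_det, det_fin_three]))

theorem matA_pow_three : matA ^ 3 = (45306 : ℝ) • matA ^ 2 - (74211 : ℝ) • matA + (6 : ℝ) • 1 := by
  ext i j
  fin_cases i <;> fin_cases j <;>
    simp [matA, pow_succ, mul_apply, Fin.sum_univ_succ, one_apply] <;> norm_num

theorem matB_pow_three : matB ^ 3 = (36903 : ℝ) • matB ^ 2 - (44903 : ℝ) • matB + (1 : ℝ) • 1 := by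
  ext i j
  fin_cases i <;> fin_cases j <;>
    simp [matB, pow_succ, mul_apply, Fin.sum_univ_succ, one_apply] <;> norm_num

noncomputable def traceABApBq (p q : ℕ) : ℝ := (matA * matB * matA ^ p * matB ^ q).trace

theorem traceABApBq_add_three_left (p q : ℕ) :
    traceABApBq (p + 3) q =
      45306 * traceABApBq (p + 2) q - 74211 * traceABApBq (p + 1) q + 6 * traceABApBq p q :=
  trace_mul_pow_add_three_mul matA_pow_three (matA * matB) (matB ^ q) p

theorem traceABApBq_add_three_right (p q : ℕ) :
    traceABApBq p (q + 3) =
      36903 * traceABApBq p (q + 2) - 44903 * traceABApBq p (q + 1) + traceABApBq p q := by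
  simpa [traceABApBq] using
    trace_mul_pow_add_three_mul matB_pow_three (matA * matB * matA ^ p) 1 q

set_option maxHeartbeats 1000000 in
theorem traceABApBq_base :
    traceABApBq 2 2 = -3164 ∧ traceABApBq 2 3 = -171233664 ∧
    traceABApBq 2 4 = -6318893781764 ∧
    traceABApBq 3 2 = -219049002 ∧ traceABApBq 3 3 = -10537988104302 ∧
    traceABApBq 3 4 = -388873536893369802 ∧
    traceABApBq 4 2 = -9923997300324 ∧ traceABApBq 4 3 = -477421308542380824 ∧
    traceABApBq 4 4 = -17617832833924812095724 := by
  refine ⟨?_, ?_, ?_, ?_, ?_, ?_, ?_, ?_, ?_⟩ <;>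
    simp [traceABApBq, matA, matB, pow_succ, trace, Fin.sum_univ_succ] <;> norm_num

theorem traceABApBq_initial_doubling (q : ℕ) :
    traceABApBq 2 (q + 2) < 0 ∧ traceABApBq 3 (q + 2) ≤ 2 * traceABApBq 2 (q + 2) ∧
      traceABApBq 4 (q + 2) ≤ 2 * traceABApBq 3 (q + 2) := by
  obtain ⟨v22, v23, v24, v32, v33, v34, v42, v43, v44⟩ := traceABApBq_base
  have along_q (h : ℕ → ℝ) (hrec : ∀ n, h (n + 3) = 36903 * h (n + 2) - 44903 * h (n + 1) + h n)
      (h₀ : h 0 ≤ 0) (h₁ : h 1 ≤ 2 * h 0) (h₂ : h 2 ≤ 2 * h 1) : h q ≤ 2 ^ q * h 0 :=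
    le_two_pow_mul_of_linearRecurrence (t := 36903) (s := 44903) (d := 1)
      (by norm_num) (by norm_num) (by norm_num) (by simpa using hrec) h₀ h₁ h₂ q
  have step (p n : ℕ) := traceABApBq_add_three_right p (n + 2)
  have row₂ := along_q (fun n => traceABApBq 2 (n + 2)) (step 2) (by norm_num [v22])
    (by norm_num [v22, v23]) (by norm_num [v23, v24])
  have row₃ := along_q (fun n => traceABApBq 3 (n + 2) - 2 * traceABApBq 2 (n + 2))
    (fun n => by linarith [step 2 n, step 3 n]) (by norm_num [v22, v32])
    (by norm_num [v22, v23, v32, v33]) (by norm_num [v23, v24, v33, v34])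
  have row₄ := along_q (fun n => traceABApBq 4 (n + 2) - 2 * traceABApBq 3 (n + 2))
    (fun n => by linarith [step 3 n, step 4 n]) (by norm_num [v32, v42])
    (by norm_num [v32, v33, v42, v43]) (by norm_num [v33, v34, v43, v44])
  simp only [zero_add, v22, v32, v42] at row₂ row₃ row₄
  have two_pow_pos : (0 : ℝ) < 2 ^ q := by positivity
  exact ⟨by nlinarith, by nlinarith, by nlinarith⟩

theorem traceABApBq_neg {p q : ℕ} (hp : 2 ≤ p) (hq : 2 ≤ q) : traceABApBq p q < 0 := by
  obtain ⟨p, rfl⟩ := Nat.exists_eq_add_of_le' hp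
  obtain ⟨q, rfl⟩ := Nat.exists_eq_add_of_le' hq
  obtain ⟨c₀, c₁, c₂⟩ := traceABApBq_initial_doubling q
  have column := le_two_pow_mul_of_linearRecurrence (h := fun n => traceABApBq (n + 2) (q + 2))
    (by norm_num) (by norm_num) (by norm_num)
    (fun n => traceABApBq_add_three_left (n + 2) (q + 2)) c₀.le c₁ c₂ p
  exact column.trans_lt (mul_neg_of_pos_of_neg (by positivity) c₀)

/-- For every pair of integers `p, q ≥ 2` there exist 3-by-3 real symmetric positive
definite `A`, `B` with `Tr(A B A^p B^q) < 0`; moreover the explicit fixed pair below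
works simultaneously for all such `p`, `q`. -/
theorem trace_ABApBq_neg :
    (!![(1:ℝ),20,210; 20,402,4240; 210,4240,44903]).PosDef ∧
    (!![(36501:ℝ),-3820,190; -3820,401,-20; 190,-20,1]).PosDef ∧
    (∀ p q : ℕ, 2 ≤ p → 2 ≤ q →
      ((!![(1:ℝ),20,210; 20,402,4240; 210,4240,44903]) *
       (!![(36501:ℝ),-3820,190; -3820,401,-20; 190,-20,1]) *
       (!![(1:ℝ),20,210; 20,402,4240; 210,4240,44903]) ^ p *
       (!![(36501:ℝ),-3820,190; -3820,401,-20; 190,-20,1]) ^ q).trace < 0) ∧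
    ∀ p q : ℕ, 2 ≤ p → 2 ≤ q →
      ∃ A B : Matrix (Fin 3) (Fin 3) ℝ, A.PosDef ∧ B.PosDef ∧
        (A * B * A ^ p * B ^ q).trace < 0 :=
  ⟨posDef_matA, posDef_matB, fun _ _ hp hq => traceABApBq_neg hp hq,
    fun _ _ hp hq => ⟨matA, matB, posDef_matA, posDef_matB, traceABApBq_neg hp hq⟩⟩
end
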